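/- arXiv:1512.08868 — 8 statements merged into one kernel-verified Lean document; each statement's English description precedes it below -/
import Mathlib

section
/- Let 𝔽 = {f_n : n ∈ ℕ} be a commutative family of continuous self-maps of X (f_i ∘ f_j = f_j ∘ f_i for all i,j). If 𝔽 × 𝔽 is transitive (i.e., the system is weakly mixing), then for every m ≥ 2 the m-fold product 𝔽 × ⋯ × 𝔽 is transitive. -/
/-!
Induct on the number of pairs. Given `2 + m` pairs `(Uᵢ, Vᵢ)`, weak mixing applied to
`(U₀, V₀)` and `(U₁, V₁)` yields `h` with `h U₀ ∩ U₁ ≠ ∅` and `h V₀ ∩ V₁ ≠ ∅`. Merge the first two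
pairs into the single pair `(U₀ ∩ h⁻¹ U₁, V₀ ∩ h⁻¹ V₁)`, of nonempty open sets, and apply the
induction hypothesis to the resulting `1 + m` pairs. If `g` works for them, then `g` works for
`(U₀, V₀)` directly, and for `(U₁, V₁)` because `g` commutes with `h`.
-/

open Set Function

theorem nonempty_image_inter_of_inter_preimage {X : Type*} {g h : X → X}
    (hgh : Function.Commute g h) {U₁ U₂ V₁ V₂ : Set X}
    (H : (g '' (U₁ ∩ h ⁻¹' U₂) ∩ (V₁ ∩ h ⁻¹' V₂)).Nonempty) :
    (g '' U₁ ∩ V₁).Nonempty ∧ (g '' U₂ ∩ V₂).Nonempty := by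
  obtain ⟨_, ⟨x, ⟨hx₁, hx₂⟩, rfl⟩, hy₁, hy₂⟩ := H
  refine ⟨⟨g x, mem_image_of_mem g hx₁, hy₁⟩, ⟨g (h x), mem_image_of_mem g hx₂, ?_⟩⟩
  rw [hgh x]
  exact hy₂

section ProductTransitivity

variable {X : Type*} [TopologicalSpace X]

def IsProdTransitive (S : Set (X → X)) (m : ℕ) : Prop :=
  ∀ U V : Fin m → Set X, (∀ i, IsOpen (U i)) → (∀ i, IsOpen (V i)) →
    (∀ i, (U i).Nonempty) → (∀ i, (V i).Nonempty) →
    ∃ g ∈ S, ∀ i, (g '' U i ∩ V i).Nonempty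

/-- The square of the maps in `S` is transitive. -/
def IsWeaklyMixing (S : Set (X → X)) : Prop :=
  ∀ U₁ U₂ V₁ V₂ : Set X, IsOpen U₁ → IsOpen U₂ → IsOpen V₁ → IsOpen V₂ →
    U₁.Nonempty → U₂.Nonempty → V₁.Nonempty → V₂.Nonempty →
    ∃ g ∈ S, (g '' U₁ ∩ V₁).Nonempty ∧ (g '' U₂ ∩ V₂).Nonempty

variable {S : Set (X → X)}

theorem IsWeaklyMixing.isProdTransitive_one (hS : IsWeaklyMixing S) : IsProdTransitive S 1 := by
  intro U V hUo hVo hUn hVn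
  obtain ⟨g, hg, hgUV, -⟩ :=
    hS (U 0) (U 0) (V 0) (V 0) (hUo 0) (hUo 0) (hVo 0) (hVo 0) (hUn 0) (hUn 0) (hVn 0) (hVn 0)
  exact ⟨g, hg, Fin.forall_fin_one.mpr hgUV⟩

theorem IsWeaklyMixing.isProdTransitive_add_two (hS : IsWeaklyMixing S)
    (hcont : ∀ g ∈ S, Continuous g) (hcomm : ∀ g ∈ S, ∀ h ∈ S, Function.Commute g h) {m : ℕ}
    (hm : IsProdTransitive S (m + 1)) : IsProdTransitive S (m + 2) := by
  intro U V hUo hVo hUn hVn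
  obtain ⟨h, hh, hU, hV⟩ :=
    hS (U 0) (V 0) (U 1) (V 1) (hUo 0) (hVo 0) (hUo 1) (hVo 1) (hUn 0) (hVn 0) (hUn 1) (hVn 1)
  let merge (W : Fin (m + 2) → Set X) : Fin (m + 1) → Set X :=
    Fin.cons (W 0 ∩ h ⁻¹' W 1) fun i => W i.succ.succ
  have merge_isOpen {W : Fin (m + 2) → Set X} (hW : ∀ i, IsOpen (W i)) :
      ∀ i, IsOpen (merge W i) :=
    Fin.cases ((hW 0).inter ((hW 1).preimage (hcont h hh))) fun i => hW i.succ.succ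
  have merge_nonempty {W : Fin (m + 2) → Set X} (hW : (h '' W 0 ∩ W 1).Nonempty)
      (hW' : ∀ i, (W i).Nonempty) : ∀ i, (merge W i).Nonempty := by
    refine Fin.cases ?_ fun i => hW' i.succ.succ
    obtain ⟨_, ⟨x, hx, rfl⟩, hx'⟩ := hW
    exact ⟨x, hx, hx'⟩
  obtain ⟨g, hg, hgUV⟩ := hm (merge U) (merge V) (merge_isOpen hUo) (merge_isOpen hVo)
    (merge_nonempty hU hUn) (merge_nonempty hV hVn)
  have hfirst := nonempty_image_inter_of_inter_preimage (hcomm g hg h hh) (hgUV 0)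
  exact ⟨g, hg, Fin.cases hfirst.1 (Fin.cases hfirst.2 fun i => hgUV i.succ)⟩

theorem IsWeaklyMixing.isProdTransitive (hS : IsWeaklyMixing S)
    (hcont : ∀ g ∈ S, Continuous g) (hcomm : ∀ g ∈ S, ∀ h ∈ S, Function.Commute g h) {m : ℕ}
    (hm : m ≠ 0) : IsProdTransitive S m := by
  obtain ⟨n, rfl⟩ := Nat.exists_eq_succ_of_ne_zero hm
  induction n with
  | zero => exact hS.isProdTransitive_one
  | succ n ih => exact hS.isProdTransitive_add_two hcont hcomm (ih n.succ_ne_zero)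

end ProductTransitivity

section CompositionSequence

variable {X : Type*} {f ω : ℕ → X → X}

theorem continuous_of_comp_succ [TopologicalSpace X] (hf : ∀ i, Continuous (f i))
    (hω0 : ω 0 = id) (hω : ∀ k, ω (k + 1) = f (k + 1) ∘ ω k) (k : ℕ) : Continuous (ω k) := by
  induction k with
  | zero => exact hω0 ▸ continuous_id
  | succ k ih => exact hω k ▸ (hf (k + 1)).comp ih

theorem commute_of_comp_succ (hf : ∀ i j, Function.Commute (f i) (f j))
    (hω0 : ω 0 = id) (hω : ∀ k, ω (k + 1) = f (k + 1) ∘ ω k) (n k : ℕ) :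
    Function.Commute (ω n) (ω k) := by
  have hfω (i k : ℕ) : Function.Commute (f i) (ω k) := by
    induction k with
    | zero => exact hω0 ▸ Function.Commute.id_right
    | succ k ih => exact hω k ▸ (hf i (k + 1)).comp_right ih
  induction n with
  | zero => exact hω0 ▸ Function.Commute.id_left
  | succ n ih => exact hω n ▸ (hfω (n + 1) k).comp_left ih

end CompositionSequence

theorem stmt2_general {X : Type*} [MetricSpace X]
    (f : ℕ → X → X) (hfc : ∀ i, Continuous (f i))
    (hcomm : ∀ i j, f i ∘ f j = f j ∘ f i)
    (ω : ℕ → X → X) (hω0 : ω 0 = id)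
    (hω : ∀ k, ω (k + 1) = f (k + 1) ∘ ω k)
    (h2 : ∀ U₁ U₂ V₁ V₂ : Set X, IsOpen U₁ → IsOpen U₂ → IsOpen V₁ → IsOpen V₂ →
      U₁.Nonempty → U₂.Nonempty → V₁.Nonempty → V₂.Nonempty →
      ∃ k : ℕ, 1 ≤ k ∧ (ω k '' U₁ ∩ V₁).Nonempty ∧ (ω k '' U₂ ∩ V₂).Nonempty) :
    ∀ m : ℕ, 2 ≤ m → ∀ U V : Fin m → Set X,
      (∀ i, IsOpen (U i)) → (∀ i, IsOpen (V i)) →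
      (∀ i, (U i).Nonempty) → (∀ i, (V i).Nonempty) →
      ∃ k : ℕ, 1 ≤ k ∧ ∀ i, (ω k '' U i ∩ V i).Nonempty := by
  intro m hm U V hUo hVo hUn hVn
  have hmixing : IsWeaklyMixing (ω '' Ici 1) := by
    intro U₁ U₂ V₁ V₂ hU₁ hU₂ hV₁ hV₂ hU₁' hU₂' hV₁' hV₂'
    obtain ⟨k, hk, hkUV⟩ := h2 U₁ U₂ V₁ V₂ hU₁ hU₂ hV₁ hV₂ hU₁' hU₂' hV₁' hV₂'
    exact ⟨ω k, mem_image_of_mem ω hk, hkUV⟩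
  have hcont : ∀ g ∈ ω '' Ici 1, Continuous g := by
    rintro _ ⟨k, -, rfl⟩
    exact continuous_of_comp_succ hfc hω0 hω k
  have hωcomm : ∀ g ∈ ω '' Ici 1, ∀ h ∈ ω '' Ici 1, Function.Commute g h := by
    rintro _ ⟨n, -, rfl⟩ _ ⟨k, -, rfl⟩
    exact commute_of_comp_succ (fun i j => semiconj_iff_comp_eq.mpr (hcomm i j)) hω0 hω n k
  obtain ⟨_, ⟨k, hk, rfl⟩, hkUV⟩ :=
    hmixing.isProdTransitive hcont hωcomm (by omega) U V hUo hVo hUn hVn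
  exact ⟨k, hk, hkUV⟩

/-- For a commutative family `𝔽 = {f_n : n ∈ ℕ}` of continuous
self-maps, if `𝔽 × 𝔽` is transitive, then every `m`-fold product (`m ≥ 2`)
of `𝔽` with itself is transitive. -/
theorem stmt2 {X : Type*} [MetricSpace X] [CompactSpace X]
    (f : ℕ → X → X) (hfc : ∀ i, Continuous (f i))
    (hcomm : ∀ i j, f i ∘ f j = f j ∘ f i)
    (ω : ℕ → X → X) (hω0 : ω 0 = id)
    (hω : ∀ k, ω (k + 1) = f (k + 1) ∘ ω k)
    (h2 : ∀ U₁ U₂ V₁ V₂ : Set X, IsOpen U₁ → IsOpen U₂ → IsOpen V₁ → IsOpen V₂ →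
      U₁.Nonempty → U₂.Nonempty → V₁.Nonempty → V₂.Nonempty →
      ∃ k : ℕ, 1 ≤ k ∧ (ω k '' U₁ ∩ V₁).Nonempty ∧ (ω k '' U₂ ∩ V₂).Nonempty) :
    ∀ m : ℕ, 2 ≤ m → ∀ U V : Fin m → Set X,
      (∀ i, IsOpen (U i)) → (∀ i, IsOpen (V i)) →
      (∀ i, (U i).Nonempty) → (∀ i, (V i).Nonempty) →
      ∃ k : ℕ, 1 ≤ k ∧ ∀ i, (ω k '' U i ∩ V i).Nonempty :=
  stmt2_general f hfc hcomm ω hω0 hω h2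
end

section
/- The non-autonomous system (X, 𝔽) is topologically mixing if and only if for every nonempty open set U ⊆ X, the closures of ω_n(U) converge to X in the Hausdorff metric as n → ∞. -/
/-- The non-autonomous system `(X, 𝔽)` is topologically mixing iff for
every nonempty open set `U`, the closures of `ω_n(U)` converge to `X` in the
Hausdorff metric. -/
theorem stmt4 {X : Type*} [MetricSpace X] [CompactSpace X]
    (f : ℕ → X → X) (hfc : ∀ i, Continuous (f i))
    (ω : ℕ → X → X) (hω0 : ω 0 = id)
    (hω : ∀ k, ω (k + 1) = f (k + 1) ∘ ω k) :
    (∀ U V : Set X, IsOpen U → IsOpen V → U.Nonempty → V.Nonempty →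
      ∃ K : ℕ, 1 ≤ K ∧ ∀ k, K ≤ k → (ω k '' U ∩ V).Nonempty) ↔
    (∀ U : Set X, IsOpen U → U.Nonempty →
      Filter.Tendsto (fun n : ℕ => Metric.hausdorffDist (closure (ω n '' U)) (Set.univ : Set X))
        Filter.atTop (nhds 0)) := by
  classical
  constructor
  · intro h U hUo hUne
    rw [Metric.tendsto_atTop]
    intro ε hε
    obtain ⟨t, -, htfin, htcover⟩ :=
      finite_cover_balls_of_compact (isCompact_univ (X := X)) (show (0:ℝ) < ε/3 by linarith)
    have spec : ∀ c ∈ t, ∃ K : ℕ, 1 ≤ K ∧ ∀ k, K ≤ k →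
        (ω k '' U ∩ Metric.ball c (ε/3)).Nonempty := by
      intro c _
      exact h U (Metric.ball c (ε/3)) hUo Metric.isOpen_ball hUne
        ⟨c, Metric.mem_ball_self (by linarith)⟩
    set F : X → ℕ := fun c => if hc : c ∈ t then (spec c hc).choose else 0 with hF
    refine ⟨htfin.toFinset.sup F, fun n hn => ?_⟩
    have hbound : ∀ x : X, Metric.infDist x (closure (ω n '' U)) ≤ 2*ε/3 := by
      intro x
      obtain ⟨c, hc, hxc⟩ := Set.mem_iUnion₂.mp (htcover (Set.mem_univ x))
      have hFc : F c ≤ n := le_trans (Finset.le_sup (htfin.mem_toFinset.mpr hc)) hn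
      have hFc' : (spec c hc).choose ≤ n := by simpa [hF, hc] using hFc
      obtain ⟨y, hy1, hy2⟩ := (spec c hc).choose_spec.2 n hFc'
      have hxy : dist x y ≤ 2*ε/3 := by
        calc dist x y ≤ dist x c + dist c y := dist_triangle x c y
        _ ≤ ε/3 + ε/3 := by
            have h1 := Metric.mem_ball.mp hxc
            have h2 := Metric.mem_ball.mp hy2
            rw [dist_comm] at h2
            exact add_le_add h1.le h2.le
        _ = 2*ε/3 := by ring
      calc Metric.infDist x (closure (ω n '' U)) ≤ dist x y :=
            Metric.infDist_le_dist_of_mem (subset_closure hy1)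
        _ ≤ 2*ε/3 := hxy
    have hne : (ω n '' U).Nonempty := hUne.image _
    have hd : Metric.hausdorffDist (closure (ω n '' U)) (Set.univ : Set X) ≤ 2*ε/3 := by
      apply Metric.hausdorffDist_le_of_infDist (by linarith)
      · intro x _
        have : Metric.infDist x (Set.univ : Set X) ≤ dist x x :=
          Metric.infDist_le_dist_of_mem (Set.mem_univ x)
        simpa using le_trans this (by simp [le_of_lt]; linarith)
      · intro x _
        exact hbound x
    rw [Real.dist_eq, sub_zero, abs_of_nonneg Metric.hausdorffDist_nonneg]
    linarith
  · intro h U V hUo hVo hUne hVne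
    obtain ⟨v, hv⟩ := hVne
    obtain ⟨ε, hε, hball⟩ := Metric.isOpen_iff.mp hVo v hv
    have ht := h U hUo hUne
    rw [Metric.tendsto_atTop] at ht
    obtain ⟨K, hK⟩ := ht (ε/2) (by linarith)
    refine ⟨max K 1, le_max_right _ _, fun k hk => ?_⟩
    have h1 := hK k (le_trans (le_max_left _ _) hk)
    rw [Real.dist_eq, sub_zero, abs_of_nonneg Metric.hausdorffDist_nonneg] at h1
    have hne : (ω k '' U).Nonempty := hUne.image _
    have hfin : EMetric.hausdorffEdist (Set.univ : Set X) (closure (ω k '' U)) ≠ ⊤ :=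
      Metric.hausdorffEdist_ne_top_of_nonempty_of_bounded ⟨v, Set.mem_univ v⟩
        hne.closure (isCompact_univ.isBounded)
        ((isCompact_univ.isBounded).subset (Set.subset_univ _))
    have hinf : Metric.infDist v (closure (ω k '' U)) ≤
        Metric.hausdorffDist (closure (ω k '' U)) (Set.univ : Set X) := by
      rw [Metric.hausdorffDist_comm]
      exact Metric.infDist_le_hausdorffDist_of_mem (Set.mem_univ v) hfin
    have hlt : Metric.infDist v (ω k '' U) < ε := by
      rw [← Metric.infDist_closure]
      linarith
    obtain ⟨y, hy1, hy2⟩ := (Metric.infDist_lt_iff hne).mp hlt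
    exact ⟨y, hy1, hball (by rwa [Metric.mem_ball, dist_comm])⟩
end

section
/- Let 𝔽 = {f_1,...,f_n} be a finite commutative family of surjective continuous self-maps of a compact metric space X. Then the cyclically-generated non-autonomous system (X, 𝔽) is weakly mixing if and only if the autonomous system (X, f_n ∘ f_{n-1} ∘ ... ∘ f_1) is weakly mixing. -/
/-!
The maps `ω k` commute, so Furstenberg's trick applies: if `ω k₀` sends `U₁` into `U₂` and
`V₁` into `V₂` somewhere, then every hitting time of `U₁ ∩ ω k₀⁻¹ U₂` into `V₁ ∩ ω k₀⁻¹ V₂`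
hits both pairs, and by induction any finite family of pairs of open sets is hit at one time.
Let `Q ρ = f (n-1) ∘ ⋯ ∘ f ρ`, so that `Q (k % n) ∘ ω k = g^[k / n + 1]`. A time `k` hitting
the `2n` pairs `(Uᵢ, Q ρ ⁻¹' Vᵢ)` simultaneously then yields the time `k / n + 1` for `g`.
Conversely `ω (m * n) = g^[m]`.
-/

open Function Set

section

variable {X ι κ : Type*}

def hittingTimes (T : ι → X → X) (U V : Set X) : Set ι := {k | (T k '' U ∩ V).Nonempty}

theorem hittingTimes_inter_preimage_subset (T : ι → X → X) {k : ι}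
    (hk : ∀ t, Function.Commute (T k) (T t)) (U₁ U₂ V₁ V₂ : Set X) :
    hittingTimes T (U₁ ∩ T k ⁻¹' U₂) (V₁ ∩ T k ⁻¹' V₂) ⊆
      hittingTimes T U₁ V₁ ∩ hittingTimes T U₂ V₂ := by
  rintro t ⟨_, ⟨x, ⟨hx₁, hx₂⟩, rfl⟩, hy₁, hy₂⟩
  exact ⟨⟨T t x, mem_image_of_mem _ hx₁, hy₁⟩,
    ⟨T t (T k x), mem_image_of_mem _ hx₂, hk t x ▸ hy₂⟩⟩

theorem mem_hittingTimes_of_comp_eq {T : ι → X → X} {T' : κ → X → X} {Q : X → X} {k : ι}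
    {m : κ} (h : Q ∘ T k = T' m) {U V : Set X} (hk : k ∈ hittingTimes T U (Q ⁻¹' V)) :
    m ∈ hittingTimes T' U V := by
  obtain ⟨_, ⟨x, hx, rfl⟩, hxV⟩ := hk
  exact ⟨T' m x, mem_image_of_mem _ hx, by rw [← h]; exact hxV⟩

section WeaklyMixing

variable [TopologicalSpace X] (T : ι → X → X)

def WeaklyMixingAlong (S : Set ι) : Prop :=
  ∀ U₁ U₂ V₁ V₂ : Set X, IsOpen U₁ → IsOpen U₂ → IsOpen V₁ → IsOpen V₂ →
    U₁.Nonempty → U₂.Nonempty → V₁.Nonempty → V₂.Nonempty →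
    (S ∩ (hittingTimes T U₁ V₁ ∩ hittingTimes T U₂ V₂)).Nonempty

variable {T} {S : Set ι}

theorem WeaklyMixingAlong.of_comp {φ : κ → ι} {S' : Set κ} (h : WeaklyMixingAlong (T ∘ φ) S')
    (hφ : MapsTo φ S' S) : WeaklyMixingAlong T S := by
  intro U₁ U₂ V₁ V₂ hU₁ hU₂ hV₁ hV₂ hU₁' hU₂' hV₁' hV₂'
  obtain ⟨m, hm, hmU⟩ := h U₁ U₂ V₁ V₂ hU₁ hU₂ hV₁ hV₂ hU₁' hU₂' hV₁' hV₂'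
  exact ⟨φ m, hφ hm, hmU⟩

theorem WeaklyMixingAlong.exists_hittingTimes_subset_inter (h : WeaklyMixingAlong T S)
    (hT : ∀ a b, Function.Commute (T a) (T b)) (hc : ∀ a, Continuous (T a)) {U₁ U₂ V₁ V₂ : Set X}
    (hU₁ : IsOpen U₁ ∧ U₁.Nonempty) (hU₂ : IsOpen U₂ ∧ U₂.Nonempty)
    (hV₁ : IsOpen V₁ ∧ V₁.Nonempty) (hV₂ : IsOpen V₂ ∧ V₂.Nonempty) :
    ∃ A B : Set X, (IsOpen A ∧ A.Nonempty) ∧ (IsOpen B ∧ B.Nonempty) ∧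
      hittingTimes T A B ⊆ hittingTimes T U₁ V₁ ∩ hittingTimes T U₂ V₂ := by
  obtain ⟨k, -, hkU, hkV⟩ := h U₁ V₁ U₂ V₂ hU₁.1 hV₁.1 hU₂.1 hV₂.1 hU₁.2 hV₁.2 hU₂.2 hV₂.2
  exact ⟨_, _, ⟨hU₁.1.inter (hU₂.1.preimage (hc k)), image_inter_nonempty_iff.mp hkU⟩,
    ⟨hV₁.1.inter (hV₂.1.preimage (hc k)), image_inter_nonempty_iff.mp hkV⟩,
    hittingTimes_inter_preimage_subset T (hT k) U₁ U₂ V₁ V₂⟩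

theorem WeaklyMixingAlong.exists_hittingTimes_subset_biInter (h : WeaklyMixingAlong T S)
    (hT : ∀ a b, Function.Commute (T a) (T b)) (hc : ∀ a, Continuous (T a)) {s : Finset κ}
    (hs : s.Nonempty) {U V : κ → Set X} (hU : ∀ i ∈ s, IsOpen (U i) ∧ (U i).Nonempty)
    (hV : ∀ i ∈ s, IsOpen (V i) ∧ (V i).Nonempty) :
    ∃ A B : Set X, (IsOpen A ∧ A.Nonempty) ∧ (IsOpen B ∧ B.Nonempty) ∧
      hittingTimes T A B ⊆ ⋂ i ∈ s, hittingTimes T (U i) (V i) := by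
  classical
  induction hs using Finset.Nonempty.cons_induction with
  | singleton i => exact ⟨U i, V i, hU i (by simp), hV i (by simp), by simp⟩
  | cons i s hi hs ih =>
    rw [Finset.forall_mem_cons] at hU hV
    obtain ⟨A, B, hA, hB, hAB⟩ := ih hU.2 hV.2
    obtain ⟨A', B', hA', hB', hsub⟩ := h.exists_hittingTimes_subset_inter hT hc hU.1 hA hV.1 hB
    refine ⟨A', B', hA', hB', hsub.trans ?_⟩
    rw [Finset.cons_eq_insert, Finset.set_biInter_insert]
    exact inter_subset_inter_right _ hAB

end WeaklyMixing

section SeqComp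

variable {F : ℕ → X → X} {n : ℕ}

def seqComp (F : ℕ → X → X) (s : ℕ) : ℕ → X → X
  | 0 => id
  | j + 1 => F (s + j) ∘ seqComp F s j

theorem eq_seqComp_zero {ω : ℕ → X → X} (h0 : ω 0 = id) (hsucc : ∀ k, ω (k + 1) = F k ∘ ω k) :
    ω = seqComp F 0 := by
  funext k
  induction k with
  | zero => exact h0
  | succ k ih => rw [hsucc, ih, seqComp, zero_add]

theorem seqComp_add (F : ℕ → X → X) (s i j : ℕ) :
    seqComp F s (i + j) = seqComp F (s + i) j ∘ seqComp F s i := by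
  induction j with
  | zero => rfl
  | succ j ih => rw [← add_assoc, seqComp, seqComp, ih, add_assoc s i j, comp_assoc]

theorem seqComp_periodic (hF : Periodic F n) (j : ℕ) : Periodic (seqComp F · j) n := by
  intro s
  induction j with
  | zero => rfl
  | succ j ih => simp only [seqComp, ih, add_right_comm s n j, hF (s + j)]

theorem Function.Commute.seqComp_left {g : X → X} (h : ∀ a, Function.Commute (F a) g)
    (s j : ℕ) : Function.Commute (seqComp F s j) g := by
  induction j with
  | zero => exact .id_left
  | succ j ih => exact (h _).comp_left ih

theorem commute_seqComp (hF : ∀ a b, Function.Commute (F a) (F b)) (s i s' j : ℕ) :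
    Function.Commute (seqComp F s i) (seqComp F s' j) :=
  .seqComp_left (fun a => (Function.Commute.seqComp_left (fun b => (hF a b).symm) s' j).symm) s i

theorem continuous_seqComp [TopologicalSpace X] (hF : ∀ a, Continuous (F a)) (s j : ℕ) :
    Continuous (seqComp F s j) := by
  induction j with
  | zero => exact continuous_id
  | succ j ih => exact (hF _).comp ih

theorem surjective_seqComp (hF : ∀ a, Surjective (F a)) (s j : ℕ) :
    Surjective (seqComp F s j) := by
  induction j with
  | zero => exact surjective_id
  | succ j ih => exact (hF _).comp ih

theorem seqComp_zero_mul (hF : Periodic F n) (m : ℕ) :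
    seqComp F 0 (m * n) = (seqComp F 0 n)^[m] := by
  induction m with
  | zero => rw [zero_mul]; rfl
  | succ m ih =>
    have hper := (seqComp_periodic hF n).map_mod_nat (m * n)
    simp only [Nat.mul_mod_left] at hper
    rw [Nat.succ_mul, seqComp_add, ih, iterate_succ', zero_add, ← hper]

theorem seqComp_mod_comp_seqComp_zero (hF : Periodic F n) (hn : 0 < n) (k : ℕ) :
    seqComp F (k % n) (n - k % n) ∘ seqComp F 0 k = (seqComp F 0 n)^[k / n + 1] := by
  have hk : (k / n + 1) * n = k + (n - k % n) := by
    have := Nat.div_add_mod' k n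
    have := Nat.mod_lt k hn
    rw [add_one_mul]
    omega
  rw [← seqComp_zero_mul hF, hk, seqComp_add, zero_add, (seqComp_periodic hF _).map_mod_nat]

theorem WeaklyMixingAlong.iterate_seqComp [TopologicalSpace X] (hn : 0 < n) (hF : Periodic F n)
    (hcomm : ∀ a b, Function.Commute (F a) (F b)) (hc : ∀ a, Continuous (F a))
    (hs : ∀ a, Surjective (F a)) {S : Set ℕ} (h : WeaklyMixingAlong (seqComp F 0) S) :
    WeaklyMixingAlong (fun m => (seqComp F 0 n)^[m]) {m | 1 ≤ m} := by
  have hit : ∀ U V : Set X, IsOpen U → IsOpen V → U.Nonempty → V.Nonempty →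
      ∃ A B : Set X, (IsOpen A ∧ A.Nonempty) ∧ (IsOpen B ∧ B.Nonempty) ∧
        ∀ k ∈ hittingTimes (seqComp F 0) A B,
          k / n + 1 ∈ hittingTimes (fun m => (seqComp F 0 n)^[m]) U V := by
    intro U V hU hV hU' hV'
    obtain ⟨A, B, hA, hB, hAB⟩ := h.exists_hittingTimes_subset_biInter
      (commute_seqComp hcomm 0 · 0) (continuous_seqComp hc 0)
      (Finset.nonempty_range_iff.mpr hn.ne') (U := fun _ => U)
      (V := fun ρ => seqComp F ρ (n - ρ) ⁻¹' V) (fun _ _ => ⟨hU, hU'⟩)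
      (fun _ _ => ⟨hV.preimage (continuous_seqComp hc _ _),
        hV'.preimage (surjective_seqComp hs _ _)⟩)
    refine ⟨A, B, hA, hB, fun k hk => mem_hittingTimes_of_comp_eq
      (seqComp_mod_comp_seqComp_zero hF hn k) ?_⟩
    exact mem_iInter₂.mp (hAB hk) (k % n) (Finset.mem_range.mpr (Nat.mod_lt k hn))
  intro U₁ U₂ V₁ V₂ hU₁ hU₂ hV₁ hV₂ hU₁' hU₂' hV₁' hV₂'
  obtain ⟨A₁, B₁, hA₁, hB₁, h₁⟩ := hit U₁ V₁ hU₁ hV₁ hU₁' hV₁'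
  obtain ⟨A₂, B₂, hA₂, hB₂, h₂⟩ := hit U₂ V₂ hU₂ hV₂ hU₂' hV₂'
  obtain ⟨k, -, hk₁, hk₂⟩ := h A₁ A₂ B₁ B₂ hA₁.1 hA₂.1 hB₁.1 hB₂.1 hA₁.2 hA₂.2 hB₁.2 hB₂.2
  exact ⟨k / n + 1, Nat.le_add_left 1 _, h₁ k hk₁, h₂ k hk₂⟩

theorem weaklyMixingAlong_seqComp_iff [TopologicalSpace X] (hn : 0 < n) (hF : Periodic F n)
    (hcomm : ∀ a b, Function.Commute (F a) (F b)) (hc : ∀ a, Continuous (F a))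
    (hs : ∀ a, Surjective (F a)) :
    WeaklyMixingAlong (seqComp F 0) {k | 1 ≤ k} ↔
      WeaklyMixingAlong (fun m => (seqComp F 0 n)^[m]) {m | 1 ≤ m} := by
  refine ⟨WeaklyMixingAlong.iterate_seqComp hn hF hcomm hc hs, fun h => ?_⟩
  have hφ : (fun m => (seqComp F 0 n)^[m]) = seqComp F 0 ∘ (· * n) :=
    funext fun m => (seqComp_zero_mul hF m).symm
  exact (hφ ▸ h).of_comp fun m hm => Nat.mul_pos hm hn

end SeqComp

end

theorem stmt6_general {X : Type*} [MetricSpace X]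
    (n : ℕ) (hn : 0 < n) (f : Fin n → X → X)
    (hfc : ∀ i, Continuous (f i)) (hfs : ∀ i, Function.Surjective (f i))
    (hcomm : ∀ i j, f i ∘ f j = f j ∘ f i)
    (ω : ℕ → X → X) (hω0 : ω 0 = id)
    (hω : ∀ k, ω (k + 1) = f ⟨k % n, Nat.mod_lt k hn⟩ ∘ ω k)
    (g : X → X) (hg : g = ω n) :
    (∀ U₁ U₂ V₁ V₂ : Set X, IsOpen U₁ → IsOpen U₂ → IsOpen V₁ → IsOpen V₂ →
      U₁.Nonempty → U₂.Nonempty → V₁.Nonempty → V₂.Nonempty →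
      ∃ k : ℕ, 1 ≤ k ∧ (ω k '' U₁ ∩ V₁).Nonempty ∧ (ω k '' U₂ ∩ V₂).Nonempty) ↔
    (∀ U₁ U₂ V₁ V₂ : Set X, IsOpen U₁ → IsOpen U₂ → IsOpen V₁ → IsOpen V₂ →
      U₁.Nonempty → U₂.Nonempty → V₁.Nonempty → V₂.Nonempty →
      ∃ m : ℕ, 1 ≤ m ∧ (g^[m] '' U₁ ∩ V₁).Nonempty ∧ (g^[m] '' U₂ ∩ V₂).Nonempty) := by
  set F : ℕ → X → X := fun k => f ⟨k % n, Nat.mod_lt k hn⟩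
  have hF : Periodic F n := fun k => by simp only [F, Nat.add_mod_right]
  obtain rfl : ω = seqComp F 0 := eq_seqComp_zero hω0 hω
  subst hg
  exact weaklyMixingAlong_seqComp_iff hn hF (fun _ _ => congrFun (hcomm _ _))
    (fun _ => hfc _) (fun _ => hfs _)

/-- For a finite commutative family of surjective continuous self-maps
of a compact metric space, the cyclically-generated non-autonomous system is weakly
mixing iff the composed autonomous system `(X, f_n ∘ ... ∘ f_1)` is weakly mixing. -/
theorem stmt6 {X : Type*} [MetricSpace X] [CompactSpace X]
    (n : ℕ) (hn : 0 < n) (f : Fin n → X → X)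
    (hfc : ∀ i, Continuous (f i)) (hfs : ∀ i, Function.Surjective (f i))
    (hcomm : ∀ i j, f i ∘ f j = f j ∘ f i)
    (ω : ℕ → X → X) (hω0 : ω 0 = id)
    (hω : ∀ k, ω (k + 1) = f ⟨k % n, Nat.mod_lt k hn⟩ ∘ ω k)
    (g : X → X) (hg : g = ω n) :
    (∀ U₁ U₂ V₁ V₂ : Set X, IsOpen U₁ → IsOpen U₂ → IsOpen V₁ → IsOpen V₂ →
      U₁.Nonempty → U₂.Nonempty → V₁.Nonempty → V₂.Nonempty →
      ∃ k : ℕ, 1 ≤ k ∧ (ω k '' U₁ ∩ V₁).Nonempty ∧ (ω k '' U₂ ∩ V₂).Nonempty) ↔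
    (∀ U₁ U₂ V₁ V₂ : Set X, IsOpen U₁ → IsOpen U₂ → IsOpen V₁ → IsOpen V₂ →
      U₁.Nonempty → U₂.Nonempty → V₁.Nonempty → V₂.Nonempty →
      ∃ m : ℕ, 1 ≤ m ∧ (g^[m] '' U₁ ∩ V₁).Nonempty ∧ (g^[m] '' U₂ ∩ V₂).Nonempty) :=
  stmt6_general n hn f hfc hfs hcomm ω hω0 hω g hg
end

section
/- Let 𝔽 = {f_1,...,f_n} be a finite family of surjective continuous self-maps of a compact metric space X, iterated cyclically. Then the non-autonomous system (X, 𝔽) is topologically mixing if and only if the autonomous system (X, f_n ∘ f_{n-1} ∘ ... ∘ f_1) is topologically mixing. -/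
/-- For a finite family of surjective continuous self-maps of a compact
metric space, iterated cyclically, the non-autonomous system is topologically mixing
iff the composed autonomous system `(X, f_n ∘ ... ∘ f_1)` is topologically mixing. -/
theorem stmt7 {X : Type*} [MetricSpace X] [CompactSpace X]
    (n : ℕ) (hn : 0 < n) (f : Fin n → X → X)
    (hfc : ∀ i, Continuous (f i)) (hfs : ∀ i, Function.Surjective (f i))
    (ω : ℕ → X → X) (hω0 : ω 0 = id)
    (hω : ∀ k, ω (k + 1) = f ⟨k % n, Nat.mod_lt k hn⟩ ∘ ω k)
    (g : X → X) (hg : g = ω n) :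
    (∀ U V : Set X, IsOpen U → IsOpen V → U.Nonempty → V.Nonempty →
      ∃ K : ℕ, 1 ≤ K ∧ ∀ k, K ≤ k → (ω k '' U ∩ V).Nonempty) ↔
    (∀ U V : Set X, IsOpen U → IsOpen V → U.Nonempty → V.Nonempty →
      ∃ K : ℕ, 1 ≤ K ∧ ∀ k, K ≤ k → (g^[k] '' U ∩ V).Nonempty) := by
  -- continuity and surjectivity of ω k
  have hωc : ∀ k, Continuous (ω k) := by
    intro k
    induction k with
    | zero => rw [hω0]; exact continuous_id
    | succ k ih => rw [hω k]; exact (hfc _).comp ih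
  have hωs : ∀ k, Function.Surjective (ω k) := by
    intro k
    induction k with
    | zero => rw [hω0]; exact Function.surjective_id
    | succ k ih => rw [hω k]; exact (hfs _).comp ih
  -- key structural lemma : ω (m*n + k) = ω k ∘ g^[m]
  have key : ∀ m k, ω (m * n + k) = ω k ∘ g^[m] := by
    intro m
    induction m with
    | zero =>
      intro k; simp
    | succ m ih =>
      intro k
      induction k with
      | zero =>
        have h1 : (m + 1) * n + 0 = m * n + n := by ring
        rw [h1, ih n, ← hg, Function.iterate_succ']
        simp [hω0]
      | succ k ihk =>
        have h1 : (m + 1) * n + (k + 1) = ((m + 1) * n + k) + 1 := by ring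
        have hmod : ((m + 1) * n + k) % n = k % n := by
          simp [Nat.add_mul_mod_self_left, Nat.mul_add_mod, Nat.add_comm,
            Nat.add_mul_mod_self_right]
        rw [h1, hω, ihk, hω k]
        have : (⟨((m + 1) * n + k) % n, Nat.mod_lt _ hn⟩ : Fin n)
            = ⟨k % n, Nat.mod_lt _ hn⟩ := by
          apply Fin.ext; exact hmod
        rw [this]
        rfl
  constructor
  · intro H U V hU hV hUne hVne
    obtain ⟨K, hK1, hK⟩ := H U V hU hV hUne hVne
    refine ⟨K, hK1, fun k hk => ?_⟩
    have h1 : ω (k * n + 0) = ω 0 ∘ g^[k] := key k 0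
    have h2 : g^[k] '' U = ω (k * n) '' U := by
      rw [show k * n = k * n + 0 from rfl, h1, hω0]
      simp
    rw [h2]
    exact hK _ (le_trans hk (Nat.le_mul_of_pos_right k hn))
  · intro H U V hU hV hUne hVne
    -- for each residue r < n, apply mixing of g to U and (ω r)⁻¹ V
    have hch : ∀ r : Fin n, ∃ K : ℕ, 1 ≤ K ∧ ∀ m, K ≤ m →
        (g^[m] '' U ∩ (ω r)⁻¹' V).Nonempty := by
      intro r
      refine H U ((ω r)⁻¹' V) hU (hV.preimage (hωc r)) hUne ?_
      obtain ⟨v, hv⟩ := hVne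
      obtain ⟨x, hx⟩ := hωs r v
      exact ⟨x, by simp [Set.mem_preimage, hx, hv]⟩
    choose Kf hKf1 hKf using hch
    set M : ℕ := Finset.univ.sup Kf with hM
    refine ⟨n * (M + 1), Nat.mul_pos hn (Nat.succ_pos M), ?_⟩
    intro k hk
    set m := k / n with hm
    set r := k % n with hr
    have hrn : r < n := Nat.mod_lt _ hn
    have hkeq : m * n + r = k := by
      rw [hm, hr, Nat.mul_comm]; exact Nat.div_add_mod k n
    have hmM : M + 1 ≤ m := by
      rw [hm]
      exact (Nat.le_div_iff_mul_le hn).mpr (by linarith [Nat.mul_comm n (M + 1)])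
    have hKr : Kf ⟨r, hrn⟩ ≤ m :=
      le_trans (le_trans (Finset.le_sup (Finset.mem_univ _)) (Nat.le_succ M)) hmM
    obtain ⟨y, ⟨x, hxU, hxy⟩, hyV⟩ := hKf ⟨r, hrn⟩ m hKr
    refine ⟨ω r y, ⟨x, hxU, ?_⟩, hyV⟩
    rw [← hkeq, key m r]
    simp [hxy]
end

section
/- Let 𝔽 = {f_1,...,f_n} be a finite family of continuous self-maps of a compact metric space X, iterated cyclically. Then the topological entropy of the non-autonomous system satisfies h(𝔽) ≥ (1/n) · h(f_n ∘ f_{n-1} ∘ ... ∘ f_1). In particular, if the composed autonomous map has positive topological entropy, so does the non-autonomous system. -/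
open Filter Set

/-- An open cover of the whole space. -/
def IsOpenCover {X : Type*} [TopologicalSpace X] (𝒰 : Set (Set X)) : Prop :=
  (∀ U ∈ 𝒰, IsOpen U) ∧ ⋃₀ 𝒰 = Set.univ

/-- Minimal cardinality of a finite subcover of `𝒰`. -/
noncomputable def coverNum {X : Type*} [TopologicalSpace X] (𝒰 : Set (Set X)) : ℕ :=
  sInf {m : ℕ | ∃ F : Finset (Set X), ↑F ⊆ 𝒰 ∧ ⋃₀ (F : Set (Set X)) = Set.univ ∧ F.card = m}

/-- Entropy `H(𝒰) = log N(𝒰)` of an open cover. -/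
noncomputable def coverH {X : Type*} [TopologicalSpace X] (𝒰 : Set (Set X)) : ℝ :=
  Real.log (coverNum 𝒰)

/-- The join `𝒰 ∨ ω_1⁻¹𝒰 ∨ ... ∨ ω_{k-1}⁻¹𝒰` (with `ω 0 = id`). -/
def joinCover {X : Type*} [TopologicalSpace X] (ω : ℕ → X → X) (𝒰 : Set (Set X)) (k : ℕ) :
    Set (Set X) :=
  {s | ∃ g : ℕ → Set X, (∀ i, g i ∈ 𝒰) ∧ s = ⋂ i ∈ Finset.range k, ω i ⁻¹' g i}

/-- Topological entropy of the (non-autonomous) system with iterates `ω`. -/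
noncomputable def naEntropy {X : Type*} [TopologicalSpace X] (ω : ℕ → X → X) : EReal :=
  ⨆ (𝒰 : Set (Set X)) (_ : IsOpenCover 𝒰),
    Filter.limsup (fun k : ℕ => ((coverH (joinCover ω 𝒰 k) / k : ℝ) : EReal)) Filter.atTop

/- ### Auxiliary lemmas -/

lemma aux_exists_finite_subcover {X : Type*} [TopologicalSpace X] [CompactSpace X]
    {A : Set (Set X)} (hA : IsOpenCover A) :
    ∃ F : Finset (Set X), ↑F ⊆ A ∧ ⋃₀ (F : Set (Set X)) = Set.univ := by
  classical
  obtain ⟨t, ht⟩ := isCompact_univ.elim_finite_subcover (fun s : A => (s : Set X))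
    (fun s => hA.1 s s.2) (by rw [← sUnion_eq_iUnion, hA.2])
  refine ⟨t.image Subtype.val, ?_, ?_⟩
  · intro s hs
    simp only [Finset.coe_image] at hs
    obtain ⟨u, _, rfl⟩ := hs
    exact u.2
  · apply Set.eq_univ_of_univ_subset
    intro x hx
    obtain ⟨i, hi, hxi⟩ := Set.mem_iUnion₂.1 (ht hx)
    exact ⟨(i : Set X), by simp only [Finset.coe_image]; exact Set.mem_image_of_mem _ hi, hxi⟩

lemma aux_coverNum_le_of_refine {X : Type*} [TopologicalSpace X] {A B : Set (Set X)}
    (hA : ∃ F : Finset (Set X), ↑F ⊆ A ∧ ⋃₀ (F : Set (Set X)) = Set.univ)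
    (h : ∀ s ∈ A, ∃ t ∈ B, s ⊆ t) :
    coverNum B ≤ coverNum A := by
  classical
  have hne : {m : ℕ | ∃ F : Finset (Set X), ↑F ⊆ A ∧ ⋃₀ (F : Set (Set X)) = Set.univ ∧
      F.card = m}.Nonempty := by
    obtain ⟨F, h1, h2⟩ := hA
    exact ⟨F.card, F, h1, h2, rfl⟩
  obtain ⟨F, hFA, hFcov, hFcard⟩ := Nat.sInf_mem hne
  set u : Set X → Set X := fun s => if hs : ∃ t ∈ B, s ⊆ t then hs.choose else ∅ with hu
  have hprop : ∀ s ∈ (F : Set (Set X)), u s ∈ B ∧ s ⊆ u s := by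
    intro s hs
    have hex : ∃ t ∈ B, s ⊆ t := h s (hFA hs)
    simp only [hu, dif_pos hex]
    exact ⟨hex.choose_spec.1, hex.choose_spec.2⟩
  have hsub : ↑(F.image u) ⊆ B := by
    intro t ht
    simp only [Finset.coe_image] at ht
    obtain ⟨s, hs, rfl⟩ := ht
    exact (hprop s hs).1
  have hcov : ⋃₀ ((F.image u : Finset (Set X)) : Set (Set X)) = Set.univ := by
    apply Set.eq_univ_of_univ_subset
    rw [← hFcov]
    intro x hx
    obtain ⟨s, hs, hxs⟩ := hx
    exact ⟨u s, by simp only [Finset.coe_image]; exact Set.mem_image_of_mem u hs,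
      (hprop s hs).2 hxs⟩
  calc coverNum B ≤ (F.image u).card := Nat.sInf_le ⟨F.image u, hsub, hcov, rfl⟩
    _ ≤ F.card := Finset.card_image_le
    _ = coverNum A := hFcard

lemma aux_log_nat_mono {a b : ℕ} (h : a ≤ b) : Real.log a ≤ Real.log b := by
  rcases Nat.eq_zero_or_pos a with ha | ha
  · subst ha
    simp only [Nat.cast_zero, Real.log_zero]
    rcases Nat.eq_zero_or_pos b with hb | hb
    · simp [hb]
    · exact Real.log_nonneg (by exact_mod_cast hb)
  · exact Real.log_le_log (by exact_mod_cast ha) (by exact_mod_cast h)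

lemma aux_coverH_nonneg {X : Type*} [TopologicalSpace X] (A : Set (Set X)) :
    0 ≤ coverH A := by
  have := aux_log_nat_mono (Nat.zero_le (coverNum A))
  simpa [coverH] using this

lemma aux_joinCover_isOpenCover {X : Type*} [TopologicalSpace X] (ω : ℕ → X → X)
    (hc : ∀ i, Continuous (ω i)) {𝒰 : Set (Set X)} (h𝒰 : IsOpenCover 𝒰) (k : ℕ) :
    IsOpenCover (joinCover ω 𝒰 k) := by
  constructor
  · rintro s ⟨γ, hγ, rfl⟩
    exact isOpen_biInter_finset fun i _ => (h𝒰.1 _ (hγ i)).preimage (hc i)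
  · apply Set.eq_univ_of_univ_subset
    intro x _
    have hch : ∀ i : ℕ, ∃ U ∈ 𝒰, ω i x ∈ U := by
      intro i
      have : ω i x ∈ ⋃₀ 𝒰 := by rw [h𝒰.2]; trivial
      exact this
    choose γ hγ1 hγ2 using hch
    refine ⟨⋂ i ∈ Finset.range k, ω i ⁻¹' γ i, ⟨γ, hγ1, rfl⟩, ?_⟩
    simp only [Set.mem_iInter]
    intro i _
    exact hγ2 i

/-- Multiplication by a positive real constant as an order isomorphism of `EReal`. -/
noncomputable def ERealMulIso (c : ℝ) (hc : 0 < c) : EReal ≃o EReal where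
  toFun x := (c : EReal) * x
  invFun x := ((c⁻¹ : ℝ) : EReal) * x
  left_inv x := by
    show ((c⁻¹ : ℝ) : EReal) * ((c : EReal) * x) = x
    rw [← mul_assoc, ← EReal.coe_mul, inv_mul_cancel₀ hc.ne', EReal.coe_one, one_mul]
  right_inv x := by
    show ((c : ℝ) : EReal) * (((c⁻¹ : ℝ) : EReal) * x) = x
    rw [← mul_assoc, ← EReal.coe_mul, mul_inv_cancel₀ hc.ne', EReal.coe_one, one_mul]
  map_rel_iff' := by
    intro a b
    simp only [Equiv.coe_fn_mk]
    constructor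
    · intro h
      have h2 := mul_le_mul_of_nonneg_left h
        (EReal.coe_nonneg.2 (inv_nonneg.2 hc.le) : (0:EReal) ≤ ((c⁻¹ : ℝ) : EReal))
      rwa [← mul_assoc, ← mul_assoc, ← EReal.coe_mul, inv_mul_cancel₀ hc.ne', EReal.coe_one,
        one_mul, one_mul] at h2
    · intro h
      exact mul_le_mul_of_nonneg_left h (EReal.coe_nonneg.2 hc.le)

lemma aux_limsup_coe_mul {c : ℝ} (hc : 0 < c) (u : ℕ → EReal) :
    Filter.limsup (fun k => (c : EReal) * u k) Filter.atTop
      = (c : EReal) * Filter.limsup u Filter.atTop :=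
  ((ERealMulIso c hc).limsup_apply).symm

/-- `h(𝔽) ≥ (1/n) h(f_n ∘ ... ∘ f_1)`; in particular positive entropy of
the composed map forces positive entropy of the non-autonomous system. -/
theorem stmt8 {X : Type*} [MetricSpace X] [CompactSpace X]
    (n : ℕ) (hn : 0 < n) (f : Fin n → X → X)
    (hfc : ∀ i, Continuous (f i))
    (ω : ℕ → X → X) (hω0 : ω 0 = id)
    (hω : ∀ k, ω (k + 1) = f ⟨k % n, Nat.mod_lt k hn⟩ ∘ ω k)
    (g : X → X) (hg : g = ω n) :
    (((1 / (n : ℝ) : ℝ) : EReal) * naEntropy (fun k => g^[k]) ≤ naEntropy ω) ∧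
    (0 < naEntropy (fun k => g^[k]) → 0 < naEntropy ω) := by
  -- continuity of the iterates
  have hωc : ∀ k, Continuous (ω k) := by
    intro k
    induction k with
    | zero => rw [hω0]; exact continuous_id
    | succ k ih => rw [hω]; exact (hfc _).comp ih
  -- `ω (j*n + r) = ω r ∘ ω (j*n)`
  have hωadd : ∀ j r, ω (j * n + r) = ω r ∘ ω (j * n) := by
    intro j r
    induction r with
    | zero => simp [hω0]
    | succ r ih =>
      have h1 : j * n + (r + 1) = (j * n + r) + 1 := by ring
      rw [h1, hω (j * n + r), ih, hω r]
      have hmod : (j * n + r) % n = r % n := by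
        conv_lhs => rw [mul_comm]
        exact Nat.mul_add_mod n j r
      have hfin : (⟨(j * n + r) % n, Nat.mod_lt _ hn⟩ : Fin n)
          = ⟨r % n, Nat.mod_lt _ hn⟩ := Fin.ext hmod
      rw [hfin]
      rfl
  -- `ω (j*n) = g^[j]`
  have hωmul : ∀ j, ω (j * n) = g^[j] := by
    intro j
    induction j with
    | zero => simpa using hω0
    | succ j ih =>
      have h1 : (j + 1) * n = j * n + n := by ring
      rw [h1, hωadd j n, ih, ← hg, Function.iterate_succ']
  -- refinement
  have hrefine : ∀ (𝒰 : Set (Set X)) (k : ℕ), ∀ s ∈ joinCover ω 𝒰 (k * n),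
      ∃ t ∈ joinCover (fun j => g^[j]) 𝒰 k, s ⊆ t := by
    rintro 𝒰 k s ⟨γ, hγ, rfl⟩
    refine ⟨⋂ j ∈ Finset.range k, (fun j => g^[j]) j ⁻¹' γ (j * n),
      ⟨fun j => γ (j * n), fun j => hγ _, rfl⟩, ?_⟩
    intro x hx
    simp only [Set.mem_iInter, Finset.mem_range] at hx ⊢
    intro j hj
    have hjk : j * n < k * n := (Nat.mul_lt_mul_right hn).2 hj
    have := hx (j * n) hjk
    simpa [← hωmul j] using this
  -- main inequality: h(g) ≤ n * h(𝔽)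
  have key : naEntropy (fun k => g^[k]) ≤ ((n : ℝ) : EReal) * naEntropy ω := by
    unfold naEntropy
    refine iSup_le fun 𝒰 => iSup_le fun h𝒰 => ?_
    set b : ℕ → EReal := fun m => ((coverH (joinCover ω 𝒰 m) / m : ℝ) : EReal) with hb
    have hpt : ∀ k : ℕ,
        ((coverH (joinCover (fun j => g^[j]) 𝒰 k) / k : ℝ) : EReal)
          ≤ ((n : ℝ) : EReal) * b (k * n) := by
      intro k
      rw [hb]
      rw [← EReal.coe_mul, EReal.coe_le_coe_iff]
      have hAB : coverH (joinCover (fun j => g^[j]) 𝒰 k)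
          ≤ coverH (joinCover ω 𝒰 (k * n)) := by
        apply aux_log_nat_mono
        exact aux_coverNum_le_of_refine
          (aux_exists_finite_subcover (aux_joinCover_isOpenCover ω hωc h𝒰 (k * n)))
          (hrefine 𝒰 k)
      rcases Nat.eq_zero_or_pos k with hk | hk
      · subst hk; simp
      · have hk' : (0:ℝ) < (k : ℝ) := by exact_mod_cast hk
        have hn' : (0:ℝ) < (n : ℝ) := by exact_mod_cast hn
        have heq : (n : ℝ) * (coverH (joinCover ω 𝒰 (k * n)) / ((k * n : ℕ) : ℝ))
            = coverH (joinCover ω 𝒰 (k * n)) / (k : ℝ) := by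
          push_cast
          field_simp
        rw [heq]
        gcongr
    set a : ℕ → EReal :=
      fun k : ℕ => ((coverH (joinCover (fun j => g^[j]) 𝒰 k) / k : ℝ) : EReal) with hadef
    have hnn : (0 : EReal) ≤ ((n : ℝ) : EReal) := EReal.coe_nonneg.2 (by positivity)
    have h1 : Filter.limsup a atTop
        ≤ Filter.limsup (fun k : ℕ => ((n : ℝ) : EReal) * b (k * n)) atTop :=
      Filter.limsup_le_limsup (Filter.Eventually.of_forall hpt)
    have h2 : Filter.limsup (fun k : ℕ => ((n : ℝ) : EReal) * b (k * n)) atTop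
        = ((n : ℝ) : EReal) * Filter.limsup (fun k : ℕ => b (k * n)) atTop :=
      aux_limsup_coe_mul (by exact_mod_cast hn) _
    have h3 : Filter.limsup (fun k : ℕ => b (k * n)) atTop ≤ Filter.limsup b atTop := by
      have hφ : Filter.Tendsto (fun k : ℕ => k * n) atTop atTop :=
        Filter.tendsto_atTop_mono (fun k => Nat.le_mul_of_pos_right k hn) Filter.tendsto_id
      have hcomp : (fun k : ℕ => b (k * n)) = b ∘ fun k : ℕ => k * n := rfl
      rw [hcomp, Filter.limsup_comp]
      exact Filter.limsup_le_limsup_of_le hφ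
    have h4 : Filter.limsup b atTop ≤ naEntropy ω :=
      le_iSup₂ (f := fun (𝒱 : Set (Set X)) (_ : IsOpenCover 𝒱) =>
        Filter.limsup (fun k : ℕ => ((coverH (joinCover ω 𝒱 k) / k : ℝ) : EReal)) atTop) 𝒰 h𝒰
    refine h1.trans ?_
    rw [h2]
    exact mul_le_mul_of_nonneg_left (h3.trans h4) hnn
  have hpos : (0 : EReal) < ((n : ℝ) : EReal) := by
    exact_mod_cast (show (0:ℝ) < (n:ℝ) by exact_mod_cast hn)
  constructor
  · have hdiv : naEntropy (fun k => g^[k]) / ((n : ℝ) : EReal) ≤ naEntropy ω :=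
      (EReal.div_le_iff_le_mul hpos (EReal.coe_ne_top _)).2 key
    have heq : ((1 / (n : ℝ) : ℝ) : EReal) * naEntropy (fun k => g^[k])
        = naEntropy (fun k => g^[k]) / ((n : ℝ) : EReal) := by
      rw [mul_comm, one_div, EReal.coe_inv]
      rfl
    rw [heq]
    exact hdiv
  · intro hzpos
    by_contra hw
    push_neg at hw
    have h0 : naEntropy (fun k => g^[k]) ≤ 0 := by
      refine key.trans ?_
      calc ((n : ℝ) : EReal) * naEntropy ω ≤ ((n : ℝ) : EReal) * 0 :=
            mul_le_mul_of_nonneg_left hw hpos.le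
        _ = 0 := mul_zero _
    exact absurd hzpos (not_lt.2 h0)
end

section
/- If the autonomous system (X, f_n ∘ f_{n-1} ∘ ... ∘ f_1) is Li-Yorke chaotic, then the cyclically-generated non-autonomous system (X, 𝔽) is Li-Yorke chaotic. In fact, any scrambled set of the composed map is a scrambled set of the non-autonomous system. -/
open Filter

/-- A set `S` is scrambled for the system with iterates `ω`. -/
def IsScrambled {X : Type*} [MetricSpace X] (ω : ℕ → X → X) (S : Set X) : Prop :=
  ∀ x ∈ S, ∀ y ∈ S, x ≠ y →
    0 < Filter.limsup (fun k : ℕ => dist (ω k x) (ω k y)) Filter.atTop ∧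
    Filter.liminf (fun k : ℕ => dist (ω k x) (ω k y)) Filter.atTop = 0

/-- If the composed autonomous system `(X, f_n ∘ ... ∘ f_1)` is Li-Yorke
chaotic, so is the cyclically-generated non-autonomous system; indeed any scrambled set
of the composed map is scrambled for the non-autonomous system. -/
theorem stmt9 {X : Type*} [MetricSpace X] [CompactSpace X]
    (n : ℕ) (hn : 0 < n) (f : Fin n → X → X)
    (hfc : ∀ i, Continuous (f i))
    (ω : ℕ → X → X) (hω0 : ω 0 = id)
    (hω : ∀ k, ω (k + 1) = f ⟨k % n, Nat.mod_lt k hn⟩ ∘ ω k)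
    (g : X → X) (hg : g = ω n) :
    (∀ S : Set X, IsScrambled (fun k => g^[k]) S → IsScrambled ω S) ∧
    ((∃ S : Set X, ¬S.Countable ∧ IsScrambled (fun k => g^[k]) S) →
      ∃ S : Set X, ¬S.Countable ∧ IsScrambled ω S) := by
  -- Key identity: ω (n * k) = g^[k]
  have step : ∀ k, ∀ j ≤ n, ω (n * k + j) = ω j ∘ ω (n * k) := by
    intro k j hj
    induction j with
    | zero => simp [hω0]
    | succ j ih =>
      have hj' : j ≤ n := Nat.le_of_succ_le hj
      have hjlt : j < n := hj
      have e1 : n * k + (j + 1) = (n * k + j) + 1 := (Nat.add_assoc _ _ _).symm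
      rw [e1, hω (n * k + j), hω j, ih hj']
      have : (n * k + j) % n = j % n := Nat.mul_add_mod n k j
      have : (⟨(n * k + j) % n, Nat.mod_lt _ hn⟩ : Fin n) = ⟨j % n, Nat.mod_lt _ hn⟩ :=
        Fin.ext this
      rw [this]
      rfl
  have key : ∀ k, ω (n * k) = g^[k] := by
    intro k
    induction k with
    | zero => simp [hω0]
    | succ k ih =>
      have : n * (k + 1) = n * k + n := by ring
      rw [this, step k n le_rfl, ih, hg, Function.iterate_succ']
  obtain ⟨C, hC⟩ : ∃ C : ℝ, ∀ a b : X, dist a b ≤ C := by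
    rcases (Metric.isBounded_iff.1 (Metric.isBounded_of_compactSpace : Bornology.IsBounded (Set.univ : Set X))) with
      ⟨C, hC⟩
    exact ⟨C, fun a b => hC (Set.mem_univ a) (Set.mem_univ b)⟩
  have main : ∀ S : Set X, IsScrambled (fun k => g^[k]) S → IsScrambled ω S := by
    intro S hS x hx y hy hxy
    obtain ⟨hpos, hlim⟩ := hS x hx y hy hxy
    set u : ℕ → ℝ := fun k => dist (ω k x) (ω k y) with hu
    have hvu : (fun k : ℕ => dist (g^[k] x) (g^[k] y)) = u ∘ (fun k => n * k) := by
      funext k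
      simp [hu, key k]
    have hmap : Filter.map (fun k : ℕ => n * k) atTop ≤ atTop :=
      Filter.tendsto_atTop_atTop.2 fun b => ⟨b, fun a ha =>
        le_trans ha (Nat.le_mul_of_pos_left a hn)⟩
    have hbdd : ∀ l : Filter ℕ, l.IsBoundedUnder (· ≤ ·) u :=
      fun l => Filter.isBoundedUnder_of ⟨C, fun k => hC _ _⟩
    have hbdd' : ∀ l : Filter ℕ, l.IsBoundedUnder (· ≥ ·) u :=
      fun l => Filter.isBoundedUnder_of ⟨0, fun k => dist_nonneg⟩
    constructor
    · -- limsup positivity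
      have h1 : limsup (fun k : ℕ => dist (g^[k] x) (g^[k] y)) atTop
          ≤ limsup u atTop := by
        rw [hvu, Filter.limsup_comp]
        exact Filter.limsup_le_limsup_of_le hmap
          ((hbdd' _).isCoboundedUnder_le) (hbdd _)
      exact lt_of_lt_of_le hpos h1
    · -- liminf zero
      have h2 : liminf u atTop
          ≤ liminf (fun k : ℕ => dist (g^[k] x) (g^[k] y)) atTop := by
        rw [hvu, Filter.liminf_comp]
        exact Filter.liminf_le_liminf_of_le hmap (hbdd' _)
          ((hbdd _).isCoboundedUnder_ge)
      have h3 : (0 : ℝ) ≤ liminf u atTop :=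
        Filter.le_liminf_of_le ((hbdd _).isCoboundedUnder_ge)
          (Filter.Eventually.of_forall fun k => dist_nonneg)
      exact le_antisymm (h2.trans hlim.le) h3
  exact ⟨main, fun ⟨S, hSc, hSs⟩ => ⟨S, hSc, main S hSs⟩⟩
end

section
/- Let f_1, f_2 : [0,1] → [0,1] be the tent-type maps f_1(x) = 2x on [0,1/2], 3/2 − x on [1/2,1], and f_2(x) = 1/2 − x on [0,1/2], 2x − 1 on [1/2,1]. Then neither f_1 nor f_2 is topologically transitive ([1/2,1] is invariant under f_1 and [0,1/2] is invariant under f_2), but the composition f_2 ∘ f_1 is topologically transitive on [0,1]; hence the non-autonomous system generated by alternating f_1, f_2 is transitive even though neither generator is. -/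
/-- Topological transitivity of a self-map. -/
def TopTransitive {Y : Type*} [TopologicalSpace Y] (g : Y → Y) : Prop :=
  ∀ U V : Set Y, IsOpen U → IsOpen V → U.Nonempty → V.Nonempty →
    ∃ m : ℕ, 1 ≤ m ∧ (g^[m] '' U ∩ V).Nonempty

open Set Function

/-- The composition `f₂ ∘ f₁` as a real formula. -/
noncomputable def stmt10Gfun (x : ℝ) : ℝ :=
  if x ≤ 1/4 then 1/2 - 2*x else if x ≤ 1/2 then 4*x - 1 else 2 - 2*x

/-- `Cov g a b`: some iterate (≥1) of `g` maps the subtype interval `[a,b]` onto everything. -/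
def stmt10Cov (g : Set.Icc (0:ℝ) 1 → Set.Icc (0:ℝ) 1) (a b : ℝ) : Prop :=
  ∃ n : ℕ, 1 ≤ n ∧ ∀ y : Set.Icc (0:ℝ) 1, ∃ x : Set.Icc (0:ℝ) 1,
    a ≤ (x:ℝ) ∧ (x:ℝ) ≤ b ∧ g^[n] x = y

lemma stmt10cov_mono {g : Set.Icc (0:ℝ) 1 → Set.Icc (0:ℝ) 1} {a a' b b' : ℝ}
    (ha : a ≤ a') (hb : b' ≤ b) (h : stmt10Cov g a' b') : stmt10Cov g a b := by
  obtain ⟨n, hn, hc⟩ := h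
  exact ⟨n, hn, fun y => by
    obtain ⟨x, h1, h2, h3⟩ := hc y
    exact ⟨x, le_trans ha h1, le_trans h2 hb, h3⟩⟩

lemma stmt10cov_step {g : Set.Icc (0:ℝ) 1 → Set.Icc (0:ℝ) 1} {a b a' b' : ℝ}
    (hstep : ∀ y : ℝ, a' ≤ y → y ≤ b' → ∃ x : Set.Icc (0:ℝ) 1,
      a ≤ (x:ℝ) ∧ (x:ℝ) ≤ b ∧ ((g x):ℝ) = y)
    (h : stmt10Cov g a' b') : stmt10Cov g a b := by
  obtain ⟨n, hn, hc⟩ := h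
  refine ⟨n+1, by omega, fun y => ?_⟩
  obtain ⟨x', hx'a, hx'b, hx'⟩ := hc y
  obtain ⟨x, hxa, hxb, hgx⟩ := hstep (x':ℝ) hx'a hx'b
  refine ⟨x, hxa, hxb, ?_⟩
  rw [Function.iterate_succ_apply, Subtype.ext hgx]
  exact hx'

section branches
variable {g : Set.Icc (0:ℝ) 1 → Set.Icc (0:ℝ) 1}
  (hg : ∀ x : Set.Icc (0:ℝ) 1, ((g x):ℝ) = stmt10Gfun (x:ℝ))

include hg

lemma stmt10branchL (c d y : ℝ) (hc : 0 ≤ c) (hd : d ≤ 1/4)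
    (hy1 : 1/2 - 2*d ≤ y) (hy2 : y ≤ 1/2 - 2*c) :
    ∃ x : Set.Icc (0:ℝ) 1, c ≤ (x:ℝ) ∧ (x:ℝ) ≤ d ∧ ((g x):ℝ) = y := by
  refine ⟨⟨(1/2 - y)/2, Set.mem_Icc.mpr ⟨by linarith, by linarith⟩⟩,
    by show c ≤ (1/2 - y)/2; linarith, by show (1/2 - y)/2 ≤ d; linarith, ?_⟩
  rw [hg]
  show stmt10Gfun ((1/2 - y)/2) = y
  unfold stmt10Gfun
  split_ifs <;> linarith

lemma stmt10branchM (c d y : ℝ) (hc : 1/4 ≤ c) (hd : d ≤ 1/2)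
    (hy1 : 4*c - 1 ≤ y) (hy2 : y ≤ 4*d - 1) :
    ∃ x : Set.Icc (0:ℝ) 1, c ≤ (x:ℝ) ∧ (x:ℝ) ≤ d ∧ ((g x):ℝ) = y := by
  refine ⟨⟨(y+1)/4, Set.mem_Icc.mpr ⟨by linarith, by linarith⟩⟩,
    by show c ≤ (y+1)/4; linarith, by show (y+1)/4 ≤ d; linarith, ?_⟩
  rw [hg]
  show stmt10Gfun ((y+1)/4) = y
  unfold stmt10Gfun
  split_ifs <;> linarith

lemma stmt10branchR (c d y : ℝ) (hc : 1/2 ≤ c) (hd : d ≤ 1)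
    (hy1 : 2 - 2*d ≤ y) (hy2 : y ≤ 2 - 2*c) :
    ∃ x : Set.Icc (0:ℝ) 1, c ≤ (x:ℝ) ∧ (x:ℝ) ≤ d ∧ ((g x):ℝ) = y := by
  refine ⟨⟨(2 - y)/2, Set.mem_Icc.mpr ⟨by linarith, by linarith⟩⟩,
    by show c ≤ (2 - y)/2; linarith, by show (2 - y)/2 ≤ d; linarith, ?_⟩
  rw [hg]
  show stmt10Gfun ((2 - y)/2) = y
  unfold stmt10Gfun
  split_ifs <;> linarith

lemma stmt10covMid : stmt10Cov g (1/4) (1/2) := by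
  refine ⟨1, le_refl 1, fun y => ?_⟩
  obtain ⟨x, h1, h2, h3⟩ := stmt10branchM hg (1/4) (1/2) (y:ℝ) (le_refl (1/4:ℝ)) (le_refl (1/2:ℝ))
    (by linarith [y.2.1]) (by linarith [y.2.2])
  exact ⟨x, h1, h2, by rw [Function.iterate_one]; exact Subtype.ext h3⟩

lemma stmt10step (a b : ℝ) (h0 : 0 ≤ a) (h1 : b ≤ 1) (hab : a < b) :
    (a ≤ 1/4 ∧ 1/2 ≤ b) ∨
    ∃ a' b' : ℝ, 0 ≤ a' ∧ b' ≤ 1 ∧ 4/3*(b-a) ≤ b' - a' ∧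
      ∀ y : ℝ, a' ≤ y → y ≤ b' → ∃ x : Set.Icc (0:ℝ) 1,
        a ≤ (x:ℝ) ∧ (x:ℝ) ≤ b ∧ ((g x):ℝ) = y := by
  by_cases hM : a ≤ 1/4 ∧ 1/2 ≤ b
  · exact Or.inl hM
  right
  rcases le_or_gt a (1/4) with ha4 | ha4
  · -- a ≤ 1/4, hence b < 1/2
    have hb2 : b < 1/2 := by
      rcases not_and_or.1 hM with h | h
      · exact absurd ha4 h
      · exact lt_of_not_ge h
    rcases le_or_gt b (1/4) with hb4 | hb4
    · -- whole interval in left branch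
      exact ⟨1/2 - 2*b, 1/2 - 2*a, by linarith, by linarith, by linarith,
        fun y hy1 hy2 => stmt10branchL hg a b y h0 hb4 hy1 hy2⟩
    · by_cases hx : 2/3*(b-a) ≤ 1/4 - a
      · -- use left piece [a, 1/4]
        refine ⟨0, 1/2 - 2*a, le_refl 0, by linarith, by linarith, fun y hy1 hy2 => ?_⟩
        obtain ⟨x, h1', h2', h3'⟩ := stmt10branchL hg a (1/4) y h0 (le_refl (1/4:ℝ))
          (by linarith) (by linarith)
        exact ⟨x, h1', by linarith, h3'⟩
      · -- use middle piece [1/4, b]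
        refine ⟨0, 4*b - 1, le_refl 0, by linarith, by linarith, fun y hy1 hy2 => ?_⟩
        obtain ⟨x, h1', h2', h3'⟩ := stmt10branchM hg (1/4) b y (le_refl (1/4:ℝ)) (le_of_lt hb2)
          (by linarith) (by linarith)
        exact ⟨x, by linarith, h2', h3'⟩
  · rcases le_or_gt b (1/2) with hb2 | hb2
    · -- whole interval in middle branch
      exact ⟨4*a - 1, 4*b - 1, by linarith, by linarith, by linarith,
        fun y hy1 hy2 => stmt10branchM hg a b y (le_of_lt ha4) hb2 hy1 hy2⟩
    · rcases le_or_gt (1/2) a with ha2 | ha2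
      · -- whole interval in right branch
        exact ⟨2 - 2*b, 2 - 2*a, by linarith, by linarith, by linarith,
          fun y hy1 hy2 => stmt10branchR hg a b y ha2 h1 hy1 hy2⟩
      · by_cases hx : 1/3*(b-a) ≤ 1/2 - a
        · -- use middle piece [a, 1/2]
          refine ⟨4*a - 1, 1, by linarith, le_refl 1, by linarith, fun y hy1 hy2 => ?_⟩
          obtain ⟨x, h1', h2', h3'⟩ := stmt10branchM hg a (1/2) y (le_of_lt ha4) (le_refl (1/2:ℝ))
            (by linarith) (by linarith)
          exact ⟨x, h1', by linarith, h3'⟩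
        · -- use right piece [1/2, b]
          refine ⟨2 - 2*b, 1, by linarith, le_refl 1, by linarith, fun y hy1 hy2 => ?_⟩
          obtain ⟨x, h1', h2', h3'⟩ := stmt10branchR hg (1/2) b y (le_refl (1/2:ℝ)) h1
            (by linarith) (by linarith)
          exact ⟨x, by linarith, h2', h3'⟩

lemma stmt10covOf : ∀ k : ℕ, ∀ a b : ℝ, 0 ≤ a → b ≤ 1 → (3/4:ℝ)^k ≤ b - a →
    stmt10Cov g a b := by
  intro k
  induction k with
  | zero =>
    intro a b h0 h1 hL
    rw [pow_zero] at hL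
    exact stmt10cov_mono (by linarith) (by linarith) (stmt10covMid hg)
  | succ k ih =>
    intro a b h0 h1 hL
    have hpos : (0:ℝ) < (3/4:ℝ)^(k+1) := by positivity
    have hab : a < b := by linarith
    rcases stmt10step hg a b h0 h1 hab with ⟨hm1, hm2⟩ | ⟨a', b', h0', h1', hlen, hcov⟩
    · exact stmt10cov_mono hm1 hm2 (stmt10covMid hg)
    · have hps : (3/4:ℝ)^(k+1) = (3/4)^k * (3/4) := pow_succ _ _
      have hk : (3/4:ℝ)^k ≤ b' - a' := by
        rw [hps] at hL
        linarith
      exact stmt10cov_step hcov (ih a' b' h0' h1' hk)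

lemma stmt10transG : TopTransitive g := by
  rintro U V hU hV ⟨u, hu⟩ ⟨v, hv⟩
  obtain ⟨ε, hε, hball⟩ := Metric.isOpen_iff.1 hU u hu
  have hu0 := u.2.1
  have hu1 := u.2.2
  set a := max 0 ((u:ℝ) - ε/2) with ha_def
  set b := min 1 ((u:ℝ) + ε/2) with hb_def
  have ha0 : 0 ≤ a := le_max_left _ _
  have hb1 : b ≤ 1 := min_le_left _ _
  have hau : a ≤ (u:ℝ) := max_le hu0 (by linarith)
  have hub : (u:ℝ) ≤ b := le_min hu1 (by linarith)
  have haε : (u:ℝ) - ε/2 ≤ a := le_max_right _ _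
  have hbε : b ≤ (u:ℝ) + ε/2 := min_le_right _ _
  have hab : a < b := by
    rcases lt_or_eq_of_le hu1 with h | h
    · exact lt_of_le_of_lt hau (lt_min h (by linarith))
    · exact lt_of_lt_of_le (max_lt (by linarith) (by linarith)) hub
  have hsub : ∀ x : Set.Icc (0:ℝ) 1, a ≤ (x:ℝ) → (x:ℝ) ≤ b → x ∈ U := by
    intro x hx1 hx2
    apply hball
    rw [Metric.mem_ball, Subtype.dist_eq, Real.dist_eq, abs_sub_lt_iff]
    constructor <;> linarith
  obtain ⟨k, hk⟩ := exists_pow_lt_of_lt_one (sub_pos.2 hab) (by norm_num : (3/4:ℝ) < 1)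
  obtain ⟨n, hn1, hc⟩ := stmt10covOf hg k a b ha0 hb1 hk.le
  obtain ⟨x, hxa, hxb, hx⟩ := hc v
  exact ⟨n, hn1, v, ⟨x, hsub x hxa hxb, hx⟩, hv⟩

end branches

/-- For the tent-type maps `f₁, f₂` on `[0,1]`, neither `f₁` nor `f₂`
is transitive (`[1/2,1]` is `f₁`-invariant and `[0,1/2]` is `f₂`-invariant), but
`f₂ ∘ f₁` is transitive; hence the alternating non-autonomous system is transitive. -/
theorem stmt10 (f₁ f₂ : Set.Icc (0:ℝ) 1 → Set.Icc (0:ℝ) 1)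
    (h₁ : ∀ x : Set.Icc (0:ℝ) 1,
      (f₁ x : ℝ) = if (x : ℝ) ≤ 1/2 then 2 * (x : ℝ) else 3/2 - (x : ℝ))
    (h₂ : ∀ x : Set.Icc (0:ℝ) 1,
      (f₂ x : ℝ) = if (x : ℝ) ≤ 1/2 then 1/2 - (x : ℝ) else 2 * (x : ℝ) - 1)
    (ω : ℕ → Set.Icc (0:ℝ) 1 → Set.Icc (0:ℝ) 1) (hω0 : ω 0 = id)
    (hω : ∀ k, ω (k + 1) = (if k % 2 = 0 then f₁ else f₂) ∘ ω k) :
    (∀ x : Set.Icc (0:ℝ) 1, 1/2 ≤ (x : ℝ) → 1/2 ≤ (f₁ x : ℝ)) ∧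
    (∀ x : Set.Icc (0:ℝ) 1, (x : ℝ) ≤ 1/2 → (f₂ x : ℝ) ≤ 1/2) ∧
    ¬ TopTransitive f₁ ∧ ¬ TopTransitive f₂ ∧
    TopTransitive (f₂ ∘ f₁) ∧
    (∀ U V : Set (Set.Icc (0:ℝ) 1), IsOpen U → IsOpen V → U.Nonempty → V.Nonempty →
      ∃ k : ℕ, 1 ≤ k ∧ (ω k '' U ∩ V).Nonempty) := by
  have hg : ∀ x : Set.Icc (0:ℝ) 1, (((f₂ ∘ f₁) x):ℝ) = stmt10Gfun (x:ℝ) := by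
    intro x
    have hx0 := x.2.1
    have hx1 := x.2.2
    show ((f₂ (f₁ x)):ℝ) = stmt10Gfun (x:ℝ)
    rw [h₂, h₁]
    unfold stmt10Gfun
    split_ifs <;> linarith
  have inv₁ : ∀ x : Set.Icc (0:ℝ) 1, 1/2 ≤ (x : ℝ) → 1/2 ≤ (f₁ x : ℝ) := by
    intro x hx
    have hx1 := x.2.2
    rw [h₁]
    split_ifs <;> linarith
  have inv₂ : ∀ x : Set.Icc (0:ℝ) 1, (x : ℝ) ≤ 1/2 → (f₂ x : ℝ) ≤ 1/2 := by
    intro x hx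
    have hx0 := x.2.1
    rw [h₂]
    split_ifs <;> linarith
  refine ⟨inv₁, inv₂, ?_, ?_, stmt10transG hg, ?_⟩
  · -- ¬ TopTransitive f₁
    intro ht
    obtain ⟨m, hm, y, ⟨x, hxU, hxy⟩, hyV⟩ :=
      ht {x : Set.Icc (0:ℝ) 1 | 1/2 < (x:ℝ)} {x : Set.Icc (0:ℝ) 1 | (x:ℝ) < 1/2}
        (isOpen_Ioi.preimage continuous_subtype_val)
        (isOpen_Iio.preimage continuous_subtype_val)
        ⟨⟨3/4, Set.mem_Icc.mpr ⟨by norm_num, by norm_num⟩⟩, by norm_num [Set.mem_setOf_eq]⟩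
        ⟨⟨1/4, Set.mem_Icc.mpr ⟨by norm_num, by norm_num⟩⟩, by norm_num [Set.mem_setOf_eq]⟩
    have key : ∀ j : ℕ, ∀ x : Set.Icc (0:ℝ) 1, 1/2 ≤ (x:ℝ) → 1/2 ≤ ((f₁^[j] x):ℝ) := by
      intro j
      induction j with
      | zero => intro x hx; simpa using hx
      | succ j ih =>
        intro x hx
        rw [Function.iterate_succ_apply']
        exact inv₁ _ (ih x hx)
    have h1 : 1/2 ≤ ((f₁^[m] x):ℝ) := key m x (le_of_lt hxU)
    rw [hxy] at h1
    exact absurd hyV (not_lt.2 h1)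
  · -- ¬ TopTransitive f₂
    intro ht
    obtain ⟨m, hm, y, ⟨x, hxU, hxy⟩, hyV⟩ :=
      ht {x : Set.Icc (0:ℝ) 1 | (x:ℝ) < 1/2} {x : Set.Icc (0:ℝ) 1 | 1/2 < (x:ℝ)}
        (isOpen_Iio.preimage continuous_subtype_val)
        (isOpen_Ioi.preimage continuous_subtype_val)
        ⟨⟨1/4, Set.mem_Icc.mpr ⟨by norm_num, by norm_num⟩⟩, by norm_num [Set.mem_setOf_eq]⟩
        ⟨⟨3/4, Set.mem_Icc.mpr ⟨by norm_num, by norm_num⟩⟩, by norm_num [Set.mem_setOf_eq]⟩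
    have key : ∀ j : ℕ, ∀ x : Set.Icc (0:ℝ) 1, (x:ℝ) ≤ 1/2 → ((f₂^[j] x):ℝ) ≤ 1/2 := by
      intro j
      induction j with
      | zero => intro x hx; simpa using hx
      | succ j ih =>
        intro x hx
        rw [Function.iterate_succ_apply']
        exact inv₂ _ (ih x hx)
    have h1 : ((f₂^[m] x):ℝ) ≤ 1/2 := key m x (le_of_lt hxU)
    rw [hxy] at h1
    exact absurd hyV (not_lt.2 h1)
  · -- the alternating system
    intro U V hU hV hUne hVne
    obtain ⟨m, hm, hne⟩ := stmt10transG hg U V hU hV hUne hVne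
    have hω2 : ∀ n : ℕ, ω (2*n) = (f₂ ∘ f₁)^[n] := by
      intro n
      induction n with
      | zero => simpa using hω0
      | succ n ih =>
        have e1 : 2*(n+1) = (2*n+1)+1 := by ring
        rw [e1, hω, hω, if_neg (by omega), if_pos (by omega), ih,
          Function.iterate_succ']
        rfl
    exact ⟨2*m, by omega, by rw [hω2]; exact hne⟩
end

section
/- Let f₁, f₂ : [0,1]→[0,1] with f₁(x) = 2x on [0,1/2] and 3/2 − x on [1/2,1], and f₂ piecewise: −2x + 1/2 on [0,1/4], 2x − 1/2 on [1/4,1/2], −2x + 3/2 on [1/2,3/4], 2x − 3/2 on [3/4,1]. Then [0,1/2] is invariant under f₂ ∘ f₁, so f₂ ∘ f₁ is not topologically mixing (indeed not transitive), yet the alternating non-autonomous system generated by {f₁, f₂} is weakly mixing. -/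
set_option maxHeartbeats 1000000

namespace Stmt16Aux

/-- Find a sizable subinterval of `[c,d] ⊆ [0,1/2]` inside a single branch. -/
lemma find {c d : ℝ} (h0 : 0 ≤ c) (hcd : c < d) (h2 : d ≤ 1/2) :
    ∃ c₁ d₁ : ℝ, c ≤ c₁ ∧ c₁ < d₁ ∧ d₁ ≤ d ∧
      ((d-c)/3 ≤ d₁ - c₁ ∨ 1/8 ≤ d₁ - c₁) ∧
      ((0 ≤ c₁ ∧ d₁ ≤ 1/8) ∨ (1/8 ≤ c₁ ∧ d₁ ≤ 1/4) ∨
       (1/4 ≤ c₁ ∧ d₁ ≤ 3/8) ∨ (3/8 ≤ c₁ ∧ d₁ ≤ 1/2)) := by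
  by_cases hc1 : c < 1/8
  · by_cases hd1 : d ≤ 1/8
    · exact ⟨c, d, le_refl _, hcd, le_refl _, Or.inl (by linarith),
        Or.inl ⟨h0, hd1⟩⟩
    · by_cases hd2 : d ≤ 1/4
      · by_cases hm : (d - c)/2 ≤ 1/8 - c
        · exact ⟨c, 1/8, le_refl _, hc1, by linarith, Or.inl (by linarith),
            Or.inl ⟨h0, le_refl _⟩⟩
        · exact ⟨1/8, d, by linarith, by linarith, le_refl _,
            Or.inl (by linarith), Or.inr (Or.inl ⟨le_refl _, hd2⟩)⟩
      · exact ⟨1/8, 1/4, by linarith, by norm_num, by linarith,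
          Or.inr (by norm_num), Or.inr (Or.inl (by norm_num))⟩
  · by_cases hc2 : c < 1/4
    · by_cases hd1 : d ≤ 1/4
      · exact ⟨c, d, le_refl _, hcd, le_refl _, Or.inl (by linarith),
          Or.inr (Or.inl ⟨by linarith, hd1⟩)⟩
      · by_cases hd2 : d ≤ 3/8
        · by_cases hm : (d - c)/2 ≤ 1/4 - c
          · exact ⟨c, 1/4, le_refl _, hc2, by linarith, Or.inl (by linarith),
              Or.inr (Or.inl ⟨by linarith, le_refl _⟩)⟩
          · exact ⟨1/4, d, by linarith, by linarith, le_refl _,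
              Or.inl (by linarith), Or.inr (Or.inr (Or.inl ⟨le_refl _, hd2⟩))⟩
        · exact ⟨1/4, 3/8, by linarith, by norm_num, by linarith,
            Or.inr (by norm_num), Or.inr (Or.inr (Or.inl (by norm_num)))⟩
    · by_cases hc3 : c < 3/8
      · by_cases hd1 : d ≤ 3/8
        · exact ⟨c, d, le_refl _, hcd, le_refl _, Or.inl (by linarith),
            Or.inr (Or.inr (Or.inl ⟨by linarith, hd1⟩))⟩
        · by_cases hm : (d - c)/2 ≤ 3/8 - c
          · exact ⟨c, 3/8, le_refl _, hc3, by linarith, Or.inl (by linarith),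
              Or.inr (Or.inr (Or.inl ⟨by linarith, le_refl _⟩))⟩
          · exact ⟨3/8, d, by linarith, by linarith, le_refl _,
              Or.inl (by linarith), Or.inr (Or.inr (Or.inr ⟨le_refl _, h2⟩))⟩
      · exact ⟨c, d, le_refl _, hcd, le_refl _, Or.inl (by linarith),
          Or.inr (Or.inr (Or.inr ⟨by linarith, h2⟩))⟩

section
variable (f₁ f₂ : Set.Icc (0:ℝ) 1 → Set.Icc (0:ℝ) 1)
    (h₁ : ∀ x : Set.Icc (0:ℝ) 1,
      (f₁ x : ℝ) = if (x : ℝ) ≤ 1/2 then 2 * (x : ℝ) else 3/2 - (x : ℝ))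
    (h₂ : ∀ x : Set.Icc (0:ℝ) 1,
      (f₂ x : ℝ) =
        if (x : ℝ) ≤ 1/4 then -2 * (x : ℝ) + 1/2
        else if (x : ℝ) ≤ 1/2 then 2 * (x : ℝ) - 1/2
        else if (x : ℝ) ≤ 3/4 then -2 * (x : ℝ) + 3/2
        else 2 * (x : ℝ) - 3/2)

include h₁ h₂ in
lemma gval (x : Set.Icc (0:ℝ) 1) :
    (f₂ (f₁ x) : ℝ) =
      if (x:ℝ) ≤ 1/8 then 1/2 - 4*(x:ℝ)
      else if (x:ℝ) ≤ 1/4 then 4*(x:ℝ) - 1/2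
      else if (x:ℝ) ≤ 3/8 then 3/2 - 4*(x:ℝ)
      else if (x:ℝ) ≤ 1/2 then 4*(x:ℝ) - 3/2
      else if (x:ℝ) ≤ 3/4 then 3/2 - 2*(x:ℝ)
      else 2*(x:ℝ) - 3/2 := by
  have hx0 := x.2.1; have hx1 := x.2.2
  rw [h₂, h₁]
  split_ifs <;> linarith

include h₁ h₂ in
lemma br0 {c₁ d₁ : ℝ} (hc : 0 ≤ c₁) (hd : d₁ ≤ 1/8) (y : Set.Icc (0:ℝ) 1)
    (hy1 : 1/2 - 4*d₁ ≤ (y:ℝ)) (hy2 : (y:ℝ) ≤ 1/2 - 4*c₁) :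
    ∃ x : Set.Icc (0:ℝ) 1, c₁ ≤ (x:ℝ) ∧ (x:ℝ) ≤ d₁ ∧ f₂ (f₁ x) = y := by
  have hy0 := y.2.1; have hy1' := y.2.2
  have hmem : (1/2 - (y:ℝ))/4 ∈ Set.Icc (0:ℝ) 1 := ⟨by linarith, by linarith⟩
  refine ⟨⟨(1/2 - (y:ℝ))/4, hmem⟩, ?_, ?_, ?_⟩
  · show c₁ ≤ (1/2 - (y:ℝ))/4; linarith
  · show (1/2 - (y:ℝ))/4 ≤ d₁; linarith
  · apply Subtype.ext
    rw [gval f₁ f₂ h₁ h₂]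
    have hx : ((⟨(1/2 - (y:ℝ))/4, hmem⟩ : Set.Icc (0:ℝ) 1) : ℝ)
        = (1/2 - (y:ℝ))/4 := rfl
    rw [hx]
    split_ifs <;> linarith

include h₁ h₂ in
lemma br1 {c₁ d₁ : ℝ} (hc : 1/8 ≤ c₁) (hd : d₁ ≤ 1/4) (y : Set.Icc (0:ℝ) 1)
    (hy1 : 4*c₁ - 1/2 ≤ (y:ℝ)) (hy2 : (y:ℝ) ≤ 4*d₁ - 1/2) :
    ∃ x : Set.Icc (0:ℝ) 1, c₁ ≤ (x:ℝ) ∧ (x:ℝ) ≤ d₁ ∧ f₂ (f₁ x) = y := by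
  have hy0 := y.2.1; have hy1' := y.2.2
  have hmem : ((y:ℝ) + 1/2)/4 ∈ Set.Icc (0:ℝ) 1 := ⟨by linarith, by linarith⟩
  refine ⟨⟨((y:ℝ) + 1/2)/4, hmem⟩, ?_, ?_, ?_⟩
  · show c₁ ≤ ((y:ℝ) + 1/2)/4; linarith
  · show ((y:ℝ) + 1/2)/4 ≤ d₁; linarith
  · apply Subtype.ext
    rw [gval f₁ f₂ h₁ h₂]
    have hx : ((⟨((y:ℝ) + 1/2)/4, hmem⟩ : Set.Icc (0:ℝ) 1) : ℝ)
        = ((y:ℝ) + 1/2)/4 := rfl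
    rw [hx]
    split_ifs <;> linarith

include h₁ h₂ in
lemma br2 {c₁ d₁ : ℝ} (hc : 1/4 ≤ c₁) (hd : d₁ ≤ 3/8) (y : Set.Icc (0:ℝ) 1)
    (hy1 : 3/2 - 4*d₁ ≤ (y:ℝ)) (hy2 : (y:ℝ) ≤ 3/2 - 4*c₁) :
    ∃ x : Set.Icc (0:ℝ) 1, c₁ ≤ (x:ℝ) ∧ (x:ℝ) ≤ d₁ ∧ f₂ (f₁ x) = y := by
  have hy0 := y.2.1; have hy1' := y.2.2
  have hmem : (3/2 - (y:ℝ))/4 ∈ Set.Icc (0:ℝ) 1 := ⟨by linarith, by linarith⟩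
  refine ⟨⟨(3/2 - (y:ℝ))/4, hmem⟩, ?_, ?_, ?_⟩
  · show c₁ ≤ (3/2 - (y:ℝ))/4; linarith
  · show (3/2 - (y:ℝ))/4 ≤ d₁; linarith
  · apply Subtype.ext
    rw [gval f₁ f₂ h₁ h₂]
    have hx : ((⟨(3/2 - (y:ℝ))/4, hmem⟩ : Set.Icc (0:ℝ) 1) : ℝ)
        = (3/2 - (y:ℝ))/4 := rfl
    rw [hx]
    split_ifs <;> linarith

include h₁ h₂ in
lemma br3 {c₁ d₁ : ℝ} (hc : 3/8 ≤ c₁) (hd : d₁ ≤ 1/2) (y : Set.Icc (0:ℝ) 1)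
    (hy1 : 4*c₁ - 3/2 ≤ (y:ℝ)) (hy2 : (y:ℝ) ≤ 4*d₁ - 3/2) :
    ∃ x : Set.Icc (0:ℝ) 1, c₁ ≤ (x:ℝ) ∧ (x:ℝ) ≤ d₁ ∧ f₂ (f₁ x) = y := by
  have hy0 := y.2.1; have hy1' := y.2.2
  have hmem : ((y:ℝ) + 3/2)/4 ∈ Set.Icc (0:ℝ) 1 := ⟨by linarith, by linarith⟩
  refine ⟨⟨((y:ℝ) + 3/2)/4, hmem⟩, ?_, ?_, ?_⟩
  · show c₁ ≤ ((y:ℝ) + 3/2)/4; linarith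
  · show ((y:ℝ) + 3/2)/4 ≤ d₁; linarith
  · apply Subtype.ext
    rw [gval f₁ f₂ h₁ h₂]
    have hx : ((⟨((y:ℝ) + 3/2)/4, hmem⟩ : Set.Icc (0:ℝ) 1) : ℝ)
        = ((y:ℝ) + 3/2)/4 := rfl
    rw [hx]
    split_ifs <;> linarith

include h₁ h₂ in
lemma br4 {c₁ d₁ : ℝ} (hc : 1/2 ≤ c₁) (hd : d₁ ≤ 3/4) (y : Set.Icc (0:ℝ) 1)
    (hy1 : 3/2 - 2*d₁ ≤ (y:ℝ)) (hy2 : (y:ℝ) ≤ 3/2 - 2*c₁) :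
    ∃ x : Set.Icc (0:ℝ) 1, c₁ ≤ (x:ℝ) ∧ (x:ℝ) ≤ d₁ ∧ f₂ (f₁ x) = y := by
  have hy0 := y.2.1; have hy1' := y.2.2
  have hmem : (3/2 - (y:ℝ))/2 ∈ Set.Icc (0:ℝ) 1 := ⟨by linarith, by linarith⟩
  refine ⟨⟨(3/2 - (y:ℝ))/2, hmem⟩, ?_, ?_, ?_⟩
  · show c₁ ≤ (3/2 - (y:ℝ))/2; linarith
  · show (3/2 - (y:ℝ))/2 ≤ d₁; linarith
  · apply Subtype.ext
    rw [gval f₁ f₂ h₁ h₂]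
    have hx : ((⟨(3/2 - (y:ℝ))/2, hmem⟩ : Set.Icc (0:ℝ) 1) : ℝ)
        = (3/2 - (y:ℝ))/2 := rfl
    rw [hx]
    split_ifs <;> linarith

include h₁ h₂ in
lemma br5 {c₁ d₁ : ℝ} (hc : 3/4 ≤ c₁) (hd : d₁ ≤ 1) (y : Set.Icc (0:ℝ) 1)
    (hy1 : 2*c₁ - 3/2 ≤ (y:ℝ)) (hy2 : (y:ℝ) ≤ 2*d₁ - 3/2) :
    ∃ x : Set.Icc (0:ℝ) 1, c₁ ≤ (x:ℝ) ∧ (x:ℝ) ≤ d₁ ∧ f₂ (f₁ x) = y := by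
  have hy0 := y.2.1; have hy1' := y.2.2
  have hmem : ((y:ℝ) + 3/2)/2 ∈ Set.Icc (0:ℝ) 1 := ⟨by linarith, by linarith⟩
  refine ⟨⟨((y:ℝ) + 3/2)/2, hmem⟩, ?_, ?_, ?_⟩
  · show c₁ ≤ ((y:ℝ) + 3/2)/2; linarith
  · show ((y:ℝ) + 3/2)/2 ≤ d₁; linarith
  · apply Subtype.ext
    rw [gval f₁ f₂ h₁ h₂]
    have hx : ((⟨((y:ℝ) + 3/2)/2, hmem⟩ : Set.Icc (0:ℝ) 1) : ℝ)
        = ((y:ℝ) + 3/2)/2 := rfl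
    rw [hx]
    split_ifs <;> linarith

include h₁ h₂ in
lemma step {c d : ℝ} (h0 : 0 ≤ c) (hcd : c < d) (h2 : d ≤ 1/2) :
    ∃ c' d' : ℝ, 0 ≤ c' ∧ c' < d' ∧ d' ≤ 1/2 ∧
      ((4/3)*(d-c) ≤ d'-c' ∨ 1/2 ≤ d'-c') ∧
      ∀ y : Set.Icc (0:ℝ) 1, c' ≤ (y:ℝ) → (y:ℝ) ≤ d' →
        ∃ x : Set.Icc (0:ℝ) 1, c ≤ (x:ℝ) ∧ (x:ℝ) ≤ d ∧ f₂ (f₁ x) = y := by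
  obtain ⟨c₁, d₁, hcc, hcd₁, hdd, hlen, hbr⟩ := find h0 hcd h2
  rcases hbr with ⟨ha, hb⟩ | ⟨ha, hb⟩ | ⟨ha, hb⟩ | ⟨ha, hb⟩
  · refine ⟨1/2 - 4*d₁, 1/2 - 4*c₁, by linarith, by linarith, by linarith,
      ?_, fun y hy1 hy2 => ?_⟩
    · rcases hlen with h | h
      · exact Or.inl (by linarith)
      · exact Or.inr (by linarith)
    · obtain ⟨x, hx1, hx2, hx3⟩ := br0 f₁ f₂ h₁ h₂ ha hb y hy1 hy2
      exact ⟨x, by linarith, by linarith, hx3⟩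
  · refine ⟨4*c₁ - 1/2, 4*d₁ - 1/2, by linarith, by linarith, by linarith,
      ?_, fun y hy1 hy2 => ?_⟩
    · rcases hlen with h | h
      · exact Or.inl (by linarith)
      · exact Or.inr (by linarith)
    · obtain ⟨x, hx1, hx2, hx3⟩ := br1 f₁ f₂ h₁ h₂ ha hb y hy1 hy2
      exact ⟨x, by linarith, by linarith, hx3⟩
  · refine ⟨3/2 - 4*d₁, 3/2 - 4*c₁, by linarith, by linarith, by linarith,
      ?_, fun y hy1 hy2 => ?_⟩
    · rcases hlen with h | h
      · exact Or.inl (by linarith)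
      · exact Or.inr (by linarith)
    · obtain ⟨x, hx1, hx2, hx3⟩ := br2 f₁ f₂ h₁ h₂ ha hb y hy1 hy2
      exact ⟨x, by linarith, by linarith, hx3⟩
  · refine ⟨4*c₁ - 3/2, 4*d₁ - 3/2, by linarith, by linarith, by linarith,
      ?_, fun y hy1 hy2 => ?_⟩
    · rcases hlen with h | h
      · exact Or.inl (by linarith)
      · exact Or.inr (by linarith)
    · obtain ⟨x, hx1, hx2, hx3⟩ := br3 f₁ f₂ h₁ h₂ ha hb y hy1 hy2
      exact ⟨x, by linarith, by linarith, hx3⟩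

include h₁ h₂ in
lemma init {c d : ℝ} (h0 : 0 ≤ c) (hcd : c < d) (h2 : d ≤ 1) :
    ∃ c' d' : ℝ, 0 ≤ c' ∧ c' < d' ∧ d' ≤ 1/2 ∧
      ∀ y : Set.Icc (0:ℝ) 1, c' ≤ (y:ℝ) → (y:ℝ) ≤ d' →
        ∃ x : Set.Icc (0:ℝ) 1, c ≤ (x:ℝ) ∧ (x:ℝ) ≤ d ∧ f₂ (f₁ x) = y := by
  by_cases hc1 : c < 1/8
  · refine ⟨1/2 - 4*(min d (1/8)), 1/2 - 4*c, by have := min_le_right d (1/8); linarith,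
      by have := lt_min hcd hc1; linarith, by linarith, fun y hy1 hy2 => ?_⟩
    obtain ⟨x, hx1, hx2, hx3⟩ := br0 f₁ f₂ h₁ h₂ h0 (min_le_right d (1/8)) y hy1 hy2
    exact ⟨x, hx1, le_trans hx2 (min_le_left _ _), hx3⟩
  · by_cases hc2 : c < 1/4
    · refine ⟨4*c - 1/2, 4*(min d (1/4)) - 1/2, by linarith,
        by have := lt_min hcd hc2; linarith,
        by have := min_le_right d (1/4); linarith, fun y hy1 hy2 => ?_⟩
      obtain ⟨x, hx1, hx2, hx3⟩ := br1 f₁ f₂ h₁ h₂ (by linarith) (min_le_right d (1/4)) y hy1 hy2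
      exact ⟨x, hx1, le_trans hx2 (min_le_left _ _), hx3⟩
    · by_cases hc3 : c < 3/8
      · refine ⟨3/2 - 4*(min d (3/8)), 3/2 - 4*c,
          by have := min_le_right d (3/8); linarith,
          by have := lt_min hcd hc3; linarith, by linarith, fun y hy1 hy2 => ?_⟩
        obtain ⟨x, hx1, hx2, hx3⟩ := br2 f₁ f₂ h₁ h₂ (by linarith) (min_le_right d (3/8)) y hy1 hy2
        exact ⟨x, hx1, le_trans hx2 (min_le_left _ _), hx3⟩
      · by_cases hc4 : c < 1/2
        · refine ⟨4*c - 3/2, 4*(min d (1/2)) - 3/2, by linarith,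
            by have := lt_min hcd hc4; linarith,
            by have := min_le_right d (1/2); linarith, fun y hy1 hy2 => ?_⟩
          obtain ⟨x, hx1, hx2, hx3⟩ := br3 f₁ f₂ h₁ h₂ (by linarith) (min_le_right d (1/2)) y hy1 hy2
          exact ⟨x, hx1, le_trans hx2 (min_le_left _ _), hx3⟩
        · by_cases hc5 : c < 3/4
          · refine ⟨3/2 - 2*(min d (3/4)), 3/2 - 2*c,
              by have := min_le_right d (3/4); linarith,
              by have := lt_min hcd hc5; linarith, by linarith, fun y hy1 hy2 => ?_⟩
            obtain ⟨x, hx1, hx2, hx3⟩ := br4 f₁ f₂ h₁ h₂ (by linarith) (min_le_right d (3/4)) y hy1 hy2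
            exact ⟨x, hx1, le_trans hx2 (min_le_left _ _), hx3⟩
          · refine ⟨2*c - 3/2, 2*d - 3/2, by linarith, by linarith, by linarith,
              fun y hy1 hy2 => ?_⟩
            obtain ⟨x, hx1, hx2, hx3⟩ := br5 f₁ f₂ h₁ h₂ (by linarith) h2 y hy1 hy2
            exact ⟨x, hx1, hx2, hx3⟩

end
end Stmt16Aux

/-- Topological mixing of a self-map. -/
def TopMixing {Y : Type*} [TopologicalSpace Y] (g : Y → Y) : Prop :=
  ∀ U V : Set Y, IsOpen U → IsOpen V → U.Nonempty → V.Nonempty →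
    ∃ K : ℕ, 1 ≤ K ∧ ∀ k, K ≤ k → (g^[k] '' U ∩ V).Nonempty

/-- With `f₁` the tent-type map and `f₂` the four-piece map below,
`[0,1/2]` is invariant under `f₂ ∘ f₁`, so `f₂ ∘ f₁` is neither transitive nor
topologically mixing, yet the alternating non-autonomous system generated by
`{f₁, f₂}` is weakly mixing. -/
theorem stmt16 (f₁ f₂ : Set.Icc (0:ℝ) 1 → Set.Icc (0:ℝ) 1)
    (h₁ : ∀ x : Set.Icc (0:ℝ) 1,
      (f₁ x : ℝ) = if (x : ℝ) ≤ 1/2 then 2 * (x : ℝ) else 3/2 - (x : ℝ))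
    (h₂ : ∀ x : Set.Icc (0:ℝ) 1,
      (f₂ x : ℝ) =
        if (x : ℝ) ≤ 1/4 then -2 * (x : ℝ) + 1/2
        else if (x : ℝ) ≤ 1/2 then 2 * (x : ℝ) - 1/2
        else if (x : ℝ) ≤ 3/4 then -2 * (x : ℝ) + 3/2
        else 2 * (x : ℝ) - 3/2)
    (ω : ℕ → Set.Icc (0:ℝ) 1 → Set.Icc (0:ℝ) 1) (hω0 : ω 0 = id)
    (hω : ∀ k, ω (k + 1) = (if k % 2 = 0 then f₁ else f₂) ∘ ω k) :
    (∀ x : Set.Icc (0:ℝ) 1, (x : ℝ) ≤ 1/2 → ((f₂ ∘ f₁) x : ℝ) ≤ 1/2) ∧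
    ¬ TopTransitive (f₂ ∘ f₁) ∧ ¬ TopMixing (f₂ ∘ f₁) ∧
    (∀ U₁ U₂ V₁ V₂ : Set (Set.Icc (0:ℝ) 1),
      IsOpen U₁ → IsOpen U₂ → IsOpen V₁ → IsOpen V₂ →
      U₁.Nonempty → U₂.Nonempty → V₁.Nonempty → V₂.Nonempty →
      ∃ k : ℕ, 1 ≤ k ∧ (ω k '' U₁ ∩ V₁).Nonempty ∧ (ω k '' U₂ ∩ V₂).Nonempty) := by
  have hhalf : ∀ x : Set.Icc (0:ℝ) 1, (f₂ x : ℝ) ≤ 1/2 := by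
    intro x; have := x.2.1; have := x.2.2; rw [h₂]; split_ifs <;> linarith
  have part1 : ∀ x : Set.Icc (0:ℝ) 1, (x:ℝ) ≤ 1/2 → ((f₂ ∘ f₁) x : ℝ) ≤ 1/2 :=
    fun x _ => hhalf (f₁ x)
  have hVopen : IsOpen (Subtype.val ⁻¹' Set.Ioi (1/2) : Set (Set.Icc (0:ℝ) 1)) :=
    isOpen_Ioi.preimage continuous_subtype_val
  have hVne : (Subtype.val ⁻¹' Set.Ioi (1/2) : Set (Set.Icc (0:ℝ) 1)).Nonempty :=
    ⟨⟨1, by norm_num⟩, by show (1:ℝ) ∈ Set.Ioi (1/2); norm_num⟩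
  have hnotrans : ¬ TopTransitive (f₂ ∘ f₁) := by
    intro hT
    obtain ⟨m, hm, y, ⟨x, hxV, hgx⟩, hyV⟩ :=
      hT _ _ hVopen hVopen hVne hVne
    obtain ⟨n, rfl⟩ := Nat.exists_eq_add_of_le hm
    rw [add_comm, Function.iterate_succ_apply'] at hgx
    have h1 : (y:ℝ) ≤ 1/2 := by rw [← hgx]; exact hhalf _
    have h2' : (1:ℝ)/2 < (y:ℝ) := hyV
    linarith
  have hnomix : ¬ TopMixing (f₂ ∘ f₁) := by
    intro hM
    apply hnotrans
    intro U V hU hV hUn hVn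
    obtain ⟨K, hK, h⟩ := hM U V hU hV hUn hVn
    exact ⟨K, hK, h K le_rfl⟩
  refine ⟨part1, hnotrans, hnomix, ?_⟩
  have key : ∀ U : Set (Set.Icc (0:ℝ) 1), IsOpen U → U.Nonempty →
      ∃ M : ℕ, ∀ m, M ≤ m → ∀ y : Set.Icc (0:ℝ) 1, (y:ℝ) ≤ 1/2 →
        ∃ u ∈ U, (f₂ ∘ f₁)^[m] u = y := by
    rintro U hU ⟨u, huU⟩
    obtain ⟨ε, hε, hball⟩ := Metric.isOpen_iff.mp hU u huU
    have hu0 := u.2.1; have hu1 := u.2.2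
    have hc₀0 : (0:ℝ) ≤ max ((u:ℝ) - ε/2) 0 := le_max_right _ _
    have hd₀1 : min ((u:ℝ) + ε/2) 1 ≤ 1 := min_le_right _ _
    have hcd₀ : max ((u:ℝ) - ε/2) 0 < min ((u:ℝ) + ε/2) 1 :=
      max_lt (lt_min (by linarith) (by linarith))
        (lt_min (by linarith) (by linarith))
    have hsub : ∀ x : Set.Icc (0:ℝ) 1, max ((u:ℝ) - ε/2) 0 ≤ (x:ℝ) →
        (x:ℝ) ≤ min ((u:ℝ) + ε/2) 1 → x ∈ U := by
      intro x hx1 hx2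
      apply hball
      rw [Metric.mem_ball, Subtype.dist_eq, Real.dist_eq, abs_lt]
      have e1 : (u:ℝ) - ε/2 ≤ max ((u:ℝ) - ε/2) 0 := le_max_left _ _
      have e2 : min ((u:ℝ) + ε/2) 1 ≤ (u:ℝ) + ε/2 := min_le_left _ _
      constructor <;> linarith
    obtain ⟨c₁, d₁, hc₁, hcd₁, hd₁, hinit⟩ :=
      Stmt16Aux.init f₁ f₂ h₁ h₂ hc₀0 hcd₀ hd₀1
    have hiter : ∀ n : ℕ, ∃ c d : ℝ, 0 ≤ c ∧ c < d ∧ d ≤ 1/2 ∧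
        ((4/3)^n * (d₁ - c₁) ≤ d - c ∨ 1/2 ≤ d - c) ∧
        ∀ y : Set.Icc (0:ℝ) 1, c ≤ (y:ℝ) → (y:ℝ) ≤ d →
          ∃ u' ∈ U, (f₂ ∘ f₁)^[n+1] u' = y := by
      intro n
      induction n with
      | zero =>
        refine ⟨c₁, d₁, hc₁, hcd₁, hd₁, Or.inl (by rw [pow_zero, one_mul]), ?_⟩
        intro y hy1 hy2
        obtain ⟨x, hx1, hx2, hx3⟩ := hinit y hy1 hy2
        exact ⟨x, hsub x hx1 hx2, by simpa using hx3⟩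
      | succ n ih =>
        obtain ⟨c, d, hc, hcd, hd, hlen, hcov⟩ := ih
        obtain ⟨c', d', hc', hcd', hd', hlen', hcov'⟩ :=
          Stmt16Aux.step f₁ f₂ h₁ h₂ hc hcd hd
        refine ⟨c', d', hc', hcd', hd', ?_, ?_⟩
        · rcases hlen' with h' | h'
          · rcases hlen with h | h
            · left
              rw [pow_succ]
              have hp : (0:ℝ) < (4/3)^n := by positivity
              nlinarith
            · right; linarith
          · right; exact h'
        · intro y hy1 hy2
          obtain ⟨x, hx1, hx2, hx3⟩ := hcov' y hy1 hy2
          obtain ⟨u', hu', hux⟩ := hcov x hx1 hx2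
          refine ⟨u', hu', ?_⟩
          rw [Function.iterate_succ_apply', hux]
          exact hx3
    have hl : (0:ℝ) < d₁ - c₁ := by linarith
    obtain ⟨n₀, hn₀⟩ := pow_unbounded_of_one_lt ((1/2)/(d₁ - c₁))
      (by norm_num : (1:ℝ) < 4/3)
    obtain ⟨c, d, hc, hcd, hd, hlen, hcov⟩ := hiter n₀
    have hfull : 1/2 ≤ d - c := by
      rcases hlen with h | h
      · exfalso
        have h5 : (1/2)/(d₁-c₁) * (d₁ - c₁) < (4/3)^n₀ * (d₁-c₁) :=
          mul_lt_mul_of_pos_right hn₀ hl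
        rw [div_mul_cancel₀ _ (ne_of_gt hl)] at h5
        linarith
      · exact h
    have hM : ∀ y : Set.Icc (0:ℝ) 1, (y:ℝ) ≤ 1/2 →
        ∃ u' ∈ U, (f₂ ∘ f₁)^[n₀+1] u' = y := by
      intro y hy
      exact hcov y (by have := y.2.1; linarith) (by linarith)
    refine ⟨n₀+1, ?_⟩
    have mono : ∀ j : ℕ, ∀ y : Set.Icc (0:ℝ) 1, (y:ℝ) ≤ 1/2 →
        ∃ u' ∈ U, (f₂ ∘ f₁)^[n₀+1+j] u' = y := by
      intro j
      induction j with
      | zero => exact hM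
      | succ j ih =>
        intro y hy
        have hy0 := y.2.1
        obtain ⟨x, hx1, hx2, hx3⟩ := Stmt16Aux.br2 f₁ f₂ h₁ h₂
          (le_refl ((1:ℝ)/4)) (le_refl ((3:ℝ)/8)) y (by linarith) (by linarith)
        obtain ⟨u', hu', hux⟩ := ih x (by linarith)
        refine ⟨u', hu', ?_⟩
        show (f₂ ∘ f₁)^[(n₀+1+j)+1] u' = y
        rw [Function.iterate_succ_apply', hux]
        exact hx3
    intro m hm
    obtain ⟨j, rfl⟩ := Nat.exists_eq_add_of_le hm
    exact mono j
  intro U₁ U₂ V₁ V₂ hU₁ hU₂ hV₁ hV₂ hU₁n hU₂n hV₁n hV₂n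
  obtain ⟨M₁, hM₁⟩ := key U₁ hU₁ hU₁n
  obtain ⟨M₂, hM₂⟩ := key U₂ hU₂ hU₂n
  have hω2 : ∀ m : ℕ, ω (2*m) = (f₂ ∘ f₁)^[m] := by
    intro m
    induction m with
    | zero => simpa using hω0
    | succ m ih =>
      have e1 : 2*(m+1) = (2*m+1)+1 := by ring
      rw [e1, hω (2*m+1), hω (2*m)]
      rw [if_neg (by omega : ¬ (2*m+1) % 2 = 0), if_pos (by omega : (2*m) % 2 = 0)]
      rw [ih, Function.iterate_succ']
      rfl
  have hωodd : ω (2*(max M₁ M₂)+1) = f₁ ∘ (f₂ ∘ f₁)^[max M₁ M₂] := by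
    rw [hω (2*(max M₁ M₂)), if_pos (by omega : (2*(max M₁ M₂)) % 2 = 0),
      hω2 (max M₁ M₂)]
  have hhit : ∀ (V : Set (Set.Icc (0:ℝ) 1)), V.Nonempty →
      ∀ (U : Set (Set.Icc (0:ℝ) 1)),
      (∀ y : Set.Icc (0:ℝ) 1, (y:ℝ) ≤ 1/2 →
        ∃ u ∈ U, (f₂ ∘ f₁)^[max M₁ M₂] u = y) →
      (ω (2*(max M₁ M₂)+1) '' U ∩ V).Nonempty := by
    rintro V ⟨v, hv⟩ U hcover
    have hv0 := v.2.1; have hv1 := v.2.2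
    have hmem : (v:ℝ)/2 ∈ Set.Icc (0:ℝ) 1 := ⟨by linarith, by linarith⟩
    obtain ⟨u', hu', hux⟩ := hcover ⟨(v:ℝ)/2, hmem⟩
      (by show (v:ℝ)/2 ≤ 1/2; linarith)
    refine ⟨v, ⟨u', hu', ?_⟩, hv⟩
    rw [hωodd]
    show f₁ ((f₂ ∘ f₁)^[max M₁ M₂] u') = v
    rw [hux]
    apply Subtype.ext
    rw [h₁]
    have hcoe : ((⟨(v:ℝ)/2, hmem⟩ : Set.Icc (0:ℝ) 1) : ℝ) = (v:ℝ)/2 := rfl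
    rw [hcoe, if_pos (by linarith : (v:ℝ)/2 ≤ 1/2)]
    ring
  refine ⟨2*(max M₁ M₂)+1, by omega, ?_, ?_⟩
  · exact hhit V₁ hV₁n U₁ (fun y hy => hM₁ (max M₁ M₂) (le_max_left _ _) y hy)
  · exact hhit V₂ hV₂n U₂ (fun y hy => hM₂ (max M₁ M₂) (le_max_right _ _) y hy)
end
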